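/- arXiv:2303.15694 — 10 statements merged into one kernel-verified Lean document; each statement's English description precedes it below -/
import Mathlib

section
/- For coprime positive integers m and n, the number of (m,n)-Dyck paths (lattice paths from (0,m) to (n,0) using only south and east steps that stay weakly below the line mx + ny = mn) equals (1/(m+n)) * binomial(m+n, m). -/
open Finset
open Fin.NatCast

namespace DyckCount

variable (m n : ℕ) [NeZero (m + n)]

/-- step value at position j: +m for an east step (member of s), -n for a south step. -/
def stepv (s : Finset (Fin (m+n))) (j : Fin (m+n)) : ℤ :=
  if j ∈ s then (m : ℤ) else -(n : ℤ)

/-- partial sum of step values over the first k positions (indices taken mod m+n). -/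
def g (s : Finset (Fin (m+n))) (k : ℕ) : ℤ :=
  ∑ j ∈ Finset.range k, stepv m n s (j : Fin (m+n))

lemma sum_stepv_filter (s : Finset (Fin (m+n))) (t : Finset ℕ) (f : ℕ → Fin (m+n)) :
    ∑ j ∈ t, stepv m n s (f j)
      = (m+n) * ((t.filter (fun j => f j ∈ s)).card : ℤ) - n * t.card := by
  rw [← Finset.sum_filter_add_sum_filter_not t (fun j => f j ∈ s)]
  have e1 : ∑ j ∈ t.filter (fun j => f j ∈ s), stepv m n s (f j)
      = ((t.filter (fun j => f j ∈ s)).card : ℤ) * m := by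
    have : ∀ x ∈ t.filter (fun j => f j ∈ s), stepv m n s (f x) = (m : ℤ) := fun x hx => by
      simp only [Finset.mem_filter] at hx; simp [stepv, hx.2]
    rw [Finset.sum_congr rfl this, Finset.sum_const]; push_cast; ring
  have e2 : ∑ j ∈ t.filter (fun j => ¬ f j ∈ s), stepv m n s (f j)
      = ((t.filter (fun j => ¬ f j ∈ s)).card : ℤ) * (-(n:ℤ)) := by
    have : ∀ x ∈ t.filter (fun j => ¬ f j ∈ s), stepv m n s (f x) = -(n : ℤ) := fun x hx => by
      simp only [Finset.mem_filter] at hx; simp [stepv, hx.2]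
    rw [Finset.sum_congr rfl this, Finset.sum_const]; push_cast; ring
  rw [e1, e2]
  have e3 : (t.filter (fun j => ¬ f j ∈ s)).card = t.card - (t.filter (fun j => f j ∈ s)).card := by
    rw [Finset.filter_not, Finset.card_sdiff_of_subset (Finset.filter_subset _ _)]
  have e4 : (t.filter (fun j => f j ∈ s)).card ≤ t.card := Finset.card_filter_le _ _
  rw [e3]
  push_cast [Nat.cast_sub e4]
  ring
lemma g_zero (s : Finset (Fin (m+n))) : g m n s 0 = 0 := by simp [g]

lemma g_succ (s : Finset (Fin (m+n))) (k : ℕ) :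
    g m n s (k+1) = g m n s k + stepv m n s (k : Fin (m+n)) := by
  simp [g, Finset.sum_range_succ]

lemma g_add_sum (s : Finset (Fin (m+n))) (k d : ℕ) :
    g m n s (k + d) = g m n s k + ∑ j ∈ Finset.range d, stepv m n s ((k + j : ℕ) : Fin (m+n)) := by
  induction d with
  | zero => simp
  | succ d ih =>
      rw [← Nat.add_assoc, g_succ, ih, Finset.sum_range_succ]
      ring

lemma sum_stepv (s : Finset (Fin (m+n))) (hs : s.card = n) :
    ∑ i : Fin (m+n), stepv m n s i = 0 := by
  rw [← Finset.sum_filter_add_sum_filter_not Finset.univ (· ∈ s)]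
  have h1 : Finset.univ.filter (· ∈ s) = s := by
    ext x; simp
  have h2 : (Finset.univ.filter (¬ · ∈ s)).card = m := by
    rw [Finset.filter_not, Finset.card_sdiff_of_subset (by simp [h1, Finset.subset_univ])]
    simp [h1, hs, Fintype.card_fin]
  rw [h1]
  have e1 : ∑ i ∈ s, stepv m n s i = (n : ℤ) * m := by
    have : ∀ x ∈ s, stepv m n s x = (m : ℤ) := fun x hx => by simp [stepv, hx]
    rw [Finset.sum_congr rfl this, Finset.sum_const, hs]
    push_cast; ring
  have e2 : ∑ i ∈ Finset.univ.filter (¬ · ∈ s), stepv m n s i = (m : ℤ) * (-(n:ℤ)) := by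
    have : ∀ x ∈ Finset.univ.filter (¬ · ∈ s), stepv m n s x = -(n : ℤ) := fun x hx => by
      simp only [Finset.mem_filter] at hx
      simp [stepv, hx.2]
    rw [Finset.sum_congr rfl this, Finset.sum_const, h2]
    push_cast; ring
  rw [e1, e2]; ring

lemma g_period (s : Finset (Fin (m+n))) (hs : s.card = n) (k : ℕ) :
    g m n s (k + (m+n)) = g m n s k := by
  rw [g_add_sum]
  have : ∑ j ∈ Finset.range (m+n), stepv m n s ((k + j : ℕ) : Fin (m+n)) = 0 := by
    have h1 : ∑ j ∈ Finset.range (m+n), stepv m n s ((k + j : ℕ) : Fin (m+n))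
        = ∑ i : Fin (m+n), stepv m n s ((k : Fin (m+n)) + i) := by
      rw [← Fin.sum_univ_eq_sum_range (fun j => stepv m n s ((k + j : ℕ) : Fin (m+n)))]
      refine Finset.sum_congr rfl (fun i _ => ?_)
      congr 1
      push_cast
      simp [Fin.cast_val_eq_self]
    rw [h1]
    rw [Fintype.sum_equiv (Equiv.addLeft ((k : Fin (m+n))))
      (fun i => stepv m n s ((k : Fin (m+n)) + i)) (stepv m n s) (fun i => rfl)]
    exact sum_stepv m n s hs
  rw [this]; ring

lemma g_mod (s : Finset (Fin (m+n))) (hs : s.card = n) (k : ℕ) :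
    g m n s k = g m n s (k % (m+n)) := by
  conv_lhs => rw [← Nat.mod_add_div k (m+n)]
  generalize k / (m+n) = q
  induction q with
  | zero => simp
  | succ q ih =>
      rw [Nat.mul_succ, ← Nat.add_assoc, g_period m n s hs, ih]


lemma g_window (s : Finset (Fin (m+n))) (k d : ℕ) :
    g m n s (k + d) = g m n s k
      + (m+n) * (((Finset.range d).filter (fun j => ((k + j : ℕ) : Fin (m+n)) ∈ s)).card : ℤ)
      - n * d := by
  rw [g_add_sum, sum_stepv_filter m n s (Finset.range d) (fun j => ((k + j : ℕ) : Fin (m+n)))]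
  rw [Finset.card_range]
  ring

lemma no_return (h : Nat.Coprime m n) (s : Finset (Fin (m+n))) (k d : ℕ)
    (hd0 : 0 < d) (hd : d < m + n) : g m n s (k + d) ≠ g m n s k := by
  intro heq
  rw [g_window] at heq
  set c := ((Finset.range d).filter (fun j => ((k + j : ℕ) : Fin (m+n)) ∈ s)).card with hc
  have hz : ((m+n : ℕ) : ℤ) * c = (n : ℤ) * d := by push_cast; linarith
  have hznat : (m+n) * c = n * d := by exact_mod_cast hz
  have hcop : Nat.Coprime (m+n) n := Nat.coprime_add_self_left.mpr h
  have hdvd : (m+n) ∣ d := hcop.dvd_of_dvd_mul_left ⟨c, by omega⟩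
  exact absurd (Nat.le_of_dvd hd0 hdvd) (by omega)

lemma g_count (s : Finset (Fin (m+n))) (d : ℕ) (hd : d ≤ m + n) :
    g m n s d = (m+n) * ((s.filter (fun x => x.val < d)).card : ℤ) - n * d := by
  have h0 : g m n s d = g m n s (0 + d) := by rw [Nat.zero_add]
  rw [h0, g_window, g_zero]
  have : ((Finset.range d).filter (fun j => ((0 + j : ℕ) : Fin (m+n)) ∈ s)).card
      = (s.filter (fun x => x.val < d)).card := by
    apply Finset.card_bij (fun j _ => ((j : ℕ) : Fin (m+n)))
    · intro j hj
      simp only [Finset.mem_filter, Finset.mem_range, Nat.zero_add] at hj ⊢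
      refine ⟨hj.2, ?_⟩
      rw [Fin.val_cast_of_lt (lt_of_lt_of_le hj.1 hd)]
      exact hj.1
    · intro j1 hj1 j2 hj2 hfe
      simp only [Finset.mem_filter, Finset.mem_range] at hj1 hj2
      have := congrArg Fin.val hfe
      rwa [Fin.val_cast_of_lt (lt_of_lt_of_le hj1.1 hd),
        Fin.val_cast_of_lt (lt_of_lt_of_le hj2.1 hd)] at this
    · intro x hx
      simp only [Finset.mem_filter] at hx
      refine ⟨x.val, ?_, ?_⟩
      · simp only [Finset.mem_filter, Finset.mem_range, Nat.zero_add]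
        exact ⟨hx.2, by rw [Fin.cast_val_eq_self]; exact hx.1⟩
      · rw [Fin.cast_val_eq_self]
  rw [this]
  ring


def IsDyck (s : Finset (Fin (m+n))) : Prop :=
  ∀ d, 0 < d → d < m + n → g m n s d < 0

def shiftF (r : Fin (m+n)) (s : Finset (Fin (m+n))) : Finset (Fin (m+n)) :=
  s.map (Equiv.subRight r).toEmbedding

def unshiftF (r : Fin (m+n)) (s : Finset (Fin (m+n))) : Finset (Fin (m+n)) :=
  s.map (Equiv.addRight r).toEmbedding

lemma mem_shiftF {r x : Fin (m+n)} {s : Finset (Fin (m+n))} :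
    x ∈ shiftF m n r s ↔ x + r ∈ s := by
  simp [shiftF, Finset.mem_map_equiv, Equiv.subRight]

lemma mem_unshiftF {r x : Fin (m+n)} {s : Finset (Fin (m+n))} :
    x ∈ unshiftF m n r s ↔ x - r ∈ s := by
  simp [unshiftF, Finset.mem_map_equiv, Equiv.addRight, sub_eq_add_neg]

lemma card_shiftF (r : Fin (m+n)) (s : Finset (Fin (m+n))) :
    (shiftF m n r s).card = s.card := Finset.card_map _

lemma card_unshiftF (r : Fin (m+n)) (s : Finset (Fin (m+n))) :
    (unshiftF m n r s).card = s.card := Finset.card_map _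

lemma shiftF_unshiftF (r : Fin (m+n)) (s : Finset (Fin (m+n))) :
    shiftF m n r (unshiftF m n r s) = s := by
  ext x
  rw [mem_shiftF, mem_unshiftF, add_sub_cancel_right]

lemma unshiftF_shiftF (r : Fin (m+n)) (s : Finset (Fin (m+n))) :
    unshiftF m n r (shiftF m n r s) = s := by
  ext x
  rw [mem_unshiftF, mem_shiftF, sub_add_cancel]

lemma g_shiftF (r : Fin (m+n)) (s : Finset (Fin (m+n))) (k : ℕ) :
    g m n (shiftF m n r s) k = g m n s (r.val + k) - g m n s r.val := by
  induction k with
  | zero => simp [g_zero]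
  | succ k ih =>
      rw [g_succ, ih, ← Nat.add_assoc, g_succ]
      have hcast : ((r.val + k : ℕ) : Fin (m+n)) = (k : Fin (m+n)) + r := by
        push_cast
        exact add_comm _ _
      have : stepv m n (shiftF m n r s) (k : Fin (m+n))
          = stepv m n s ((r.val + k : ℕ) : Fin (m+n)) := by
        rw [hcast]
        simp only [stepv, mem_shiftF]
      rw [this]
      ring

lemma isDyck_shiftF_iff (r : Fin (m+n)) (s : Finset (Fin (m+n))) :
    IsDyck m n (shiftF m n r s) ↔
      ∀ d, 0 < d → d < m + n → g m n s (r.val + d) < g m n s r.val := by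
  unfold IsDyck
  constructor
  · intro hd d h0 hN
    have := hd d h0 hN
    rw [g_shiftF] at this
    linarith
  · intro hd d h0 hN
    rw [g_shiftF]
    linarith [hd d h0 hN]

lemma exists_shiftF_isDyck (h : Nat.Coprime m n) (s : Finset (Fin (m+n))) (hs : s.card = n) :
    ∃ r : Fin (m+n), IsDyck m n (shiftF m n r s) := by
  have hpos : 0 < m + n := Nat.pos_of_ne_zero (NeZero.ne _)
  obtain ⟨k0, hk0mem, hmax⟩ := Finset.exists_max_image (Finset.range (m+n)) (g m n s)
    ⟨0, Finset.mem_range.mpr hpos⟩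
  rw [Finset.mem_range] at hk0mem
  refine ⟨⟨k0, hk0mem⟩, ?_⟩
  rw [isDyck_shiftF_iff]
  intro d h0 hN
  have hne : g m n s (k0 + d) ≠ g m n s k0 := no_return m n h s k0 d h0 hN
  have hle : g m n s (k0 + d) ≤ g m n s k0 := by
    rw [g_mod m n s hs (k0 + d)]
    exact hmax _ (Finset.mem_range.mpr (Nat.mod_lt _ hpos))
  exact lt_of_le_of_ne hle hne

lemma isDyck_shiftF_unique (h : Nat.Coprime m n) (s : Finset (Fin (m+n))) (hs : s.card = n)
    (r r' : Fin (m+n)) (hr : IsDyck m n (shiftF m n r s)) (hr' : IsDyck m n (shiftF m n r' s)) :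
    r = r' := by
  rw [isDyck_shiftF_iff] at hr hr'
  by_contra hne
  have hvne : r.val ≠ r'.val := fun hv => hne (Fin.ext hv)
  have key : ∀ (a b : Fin (m+n)), a.val < b.val →
      (∀ d, 0 < d → d < m + n → g m n s (a.val + d) < g m n s a.val) →
      (∀ d, 0 < d → d < m + n → g m n s (b.val + d) < g m n s b.val) → False := by
    intro a b hab ha hb
    have h1 : g m n s b.val < g m n s a.val := by
      have := ha (b.val - a.val) (by omega) (by omega)
      rwa [show a.val + (b.val - a.val) = b.val by omega] at this
    have h2 : g m n s a.val < g m n s b.val := by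
      have := hb ((m+n) - (b.val - a.val)) (by omega) (by omega)
      rwa [show b.val + ((m+n) - (b.val - a.val)) = a.val + (m+n) by omega,
        g_period m n s hs] at this
    linarith
  rcases Nat.lt_or_ge r.val r'.val with hlt | hge
  · exact key r r' hlt hr hr'
  · exact key r' r (by omega) hr' hr


/-! ### The `a`-side encoding -/

lemma card_filter_val_lt (N c : ℕ) (hc : c ≤ N) :
    (Finset.univ.filter (fun i : Fin N => i.val < c)).card = c := by
  have : (Finset.univ.filter (fun i : Fin N => i.val < c))
      = (Finset.range c).attachFin (fun i hi => lt_of_lt_of_le (Finset.mem_range.mp hi) hc) := by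
    ext x
    simp
  rw [this, Finset.card_attachFin, Finset.card_range]

def Spre (a : Fin n → ℕ) (k : ℕ) : ℕ :=
  ∑ i ∈ Finset.univ.filter (fun i : Fin n => i.val < k), a i

lemma Spre_zero (a : Fin n → ℕ) : Spre n a 0 = 0 := by simp [Spre]

lemma Spre_succ (a : Fin n → ℕ) {k : ℕ} (hk : k < n) :
    Spre n a (k + 1) = Spre n a k + a ⟨k, hk⟩ := by
  unfold Spre
  have : Finset.univ.filter (fun i : Fin n => i.val < k + 1)
      = insert ⟨k, hk⟩ (Finset.univ.filter (fun i : Fin n => i.val < k)) := by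
    ext x
    simp only [Finset.mem_filter, Finset.mem_univ, true_and, Finset.mem_insert]
    constructor
    · intro hx
      rcases Nat.lt_or_ge x.val k with h' | h'
      · exact Or.inr h'
      · exact Or.inl (by apply Fin.ext; simp only [Fin.val_mk]; omega)
    · rintro (rfl | hx)
      · exact Nat.lt_succ_self k
      · omega
  rw [this, Finset.sum_insert (by simp)]
  ring

lemma Spre_mono (a : Fin n → ℕ) {k k' : ℕ} (hk : k ≤ k') : Spre n a k ≤ Spre n a k' := by
  apply Finset.sum_le_sum_of_subset
  intro x hx
  simp only [Finset.mem_filter, Finset.mem_univ, true_and] at hx ⊢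
  omega

lemma Spre_of_le (a : Fin n → ℕ) {k : ℕ} (hk : n ≤ k) : Spre n a k = ∑ i, a i := by
  unfold Spre
  congr 1
  ext x
  simp only [Finset.mem_filter, Finset.mem_univ, true_and, iff_true]
  omega

def pfun (a : Fin n → ℕ) (k : Fin n) : ℕ := k.val + Spre n a (k.val + 1)

lemma pfun_strictMono (a : Fin n → ℕ) {k k' : Fin n} (hk : k < k') :
    pfun n a k < pfun n a k' := by
  unfold pfun
  have h1 : Spre n a (k.val + 1) ≤ Spre n a (k'.val + 1) := Spre_mono n a (by omega)
  have : k.val < k'.val := hk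
  omega

lemma pfun_inj (a : Fin n → ℕ) {k k' : Fin n} (he : pfun n a k = pfun n a k') : k = k' := by
  rcases lt_trichotomy k k' with hlt | heq | hgt
  · exact absurd he (Nat.ne_of_lt (pfun_strictMono n a hlt))
  · exact heq
  · exact absurd he.symm (Nat.ne_of_lt (pfun_strictMono n a hgt))

lemma pfun_lt (a : Fin n → ℕ) (ha : ∑ i, a i = m) (k : Fin n) : pfun n a k < m + n := by
  have h1 : Spre n a (k.val + 1) ≤ m := by
    rw [← ha]
    rw [← Spre_of_le n a (le_refl n)]
    exact Spre_mono n a (by omega)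
  have := k.isLt
  unfold pfun
  omega

def toSet (a : Fin n → ℕ) : Finset (Fin (m+n)) :=
  Finset.univ.image (fun k : Fin n => ((pfun n a k : ℕ) : Fin (m+n)))

lemma val_cast_pfun (a : Fin n → ℕ) (ha : ∑ i, a i = m) (k : Fin n) :
    ((pfun n a k : ℕ) : Fin (m+n)).val = pfun n a k :=
  Fin.val_cast_of_lt (pfun_lt m n a ha k)

lemma mem_toSet (a : Fin n → ℕ) (ha : ∑ i, a i = m) {x : Fin (m+n)} :
    x ∈ toSet m n a ↔ ∃ k, pfun n a k = x.val := by
  unfold toSet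
  simp only [Finset.mem_image, Finset.mem_univ, true_and]
  constructor
  · rintro ⟨k, rfl⟩
    exact ⟨k, (val_cast_pfun m n a ha k).symm⟩
  · rintro ⟨k, hk⟩
    exact ⟨k, Fin.ext (by rw [val_cast_pfun m n a ha k, hk])⟩

lemma card_toSet (a : Fin n → ℕ) (ha : ∑ i, a i = m) : (toSet m n a).card = n := by
  unfold toSet
  rw [Finset.card_image_of_injective _ (fun k k' hkk' => ?_), Finset.card_univ, Fintype.card_fin]
  apply pfun_inj n a
  have := congrArg Fin.val hkk'
  rwa [val_cast_pfun m n a ha, val_cast_pfun m n a ha] at this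

lemma count_toSet (a : Fin n → ℕ) (ha : ∑ i, a i = m) (d : ℕ) :
    ((toSet m n a).filter (fun x => x.val < d)).card
      = (Finset.univ.filter (fun k : Fin n => pfun n a k < d)).card := by
  symm
  apply Finset.card_bij (fun k _ => ((pfun n a k : ℕ) : Fin (m+n)))
  · intro k hk
    simp only [Finset.mem_filter, Finset.mem_univ, true_and] at hk ⊢
    refine ⟨?_, by rw [val_cast_pfun m n a ha]; exact hk⟩
    rw [mem_toSet m n a ha]
    exact ⟨k, (val_cast_pfun m n a ha k).symm⟩
  · intro k1 hk1 k2 hk2 hke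
    apply pfun_inj n a
    have := congrArg Fin.val hke
    rwa [val_cast_pfun m n a ha, val_cast_pfun m n a ha] at this
  · intro x hx
    simp only [Finset.mem_filter, Finset.mem_univ, true_and] at hx
    obtain ⟨k, hk⟩ := (mem_toSet m n a ha).mp hx.1
    refine ⟨k, by simp only [Finset.mem_filter, Finset.mem_univ, true_and]; omega, ?_⟩
    exact Fin.ext (by rw [val_cast_pfun m n a ha k, hk])


/-- number of `pfun` values below `d` -/
def ecount (a : Fin n → ℕ) (d : ℕ) : ℕ :=
  (Finset.univ.filter (fun k : Fin n => pfun n a k < d)).card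

lemma pfun_mono (a : Fin n → ℕ) {k k' : Fin n} (hk : k ≤ k') : pfun n a k ≤ pfun n a k' := by
  rcases eq_or_lt_of_le hk with rfl | hlt
  · exact le_refl _
  · exact le_of_lt (pfun_strictMono n a hlt)

lemma ecount_le (a : Fin n → ℕ) (d : ℕ) : ecount n a d ≤ d := by
  have : ecount n a d ≤ (Finset.range d).card := by
    apply Finset.card_le_card_of_injOn (fun k => pfun n a k)
    · intro k hk
      simp only [Finset.coe_filter, Finset.mem_filter, Finset.mem_univ, true_and, Set.mem_setOf_eq] at hk
      exact Finset.mem_range.mpr hk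
    · intro k1 _ k2 _ hke
      exact pfun_inj n a hke
  simpa using this

lemma ecount_ge_bound (a : Fin n → ℕ) (d : ℕ) (hd0 : 0 < ecount n a d) :
    ∃ hk : ecount n a d - 1 < n, pfun n a ⟨ecount n a d - 1, hk⟩ + 1 ≤ d := by
  set t := Finset.univ.filter (fun k : Fin n => pfun n a k < d) with ht
  have htne : t.Nonempty := Finset.card_pos.mp hd0
  obtain ⟨ks, hks, hmax⟩ := Finset.exists_max_image t id htne
  have hkst : pfun n a ks < d := by
    rw [ht] at hks
    simpa using hks
  have hsub : t ⊆ Finset.univ.filter (fun k : Fin n => k.val < ks.val + 1) := by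
    intro x hx
    have := hmax x hx
    simp only [Finset.mem_filter, Finset.mem_univ, true_and]
    exact Nat.lt_succ_of_le this
  have hcard : t.card ≤ ks.val + 1 := by
    have := Finset.card_le_card hsub
    rwa [card_filter_val_lt n (ks.val + 1) ks.isLt] at this
  have he : ecount n a d = t.card := rfl
  have hkn : ecount n a d - 1 < n := by
    have := ks.isLt; omega
  refine ⟨hkn, ?_⟩
  have hle : (⟨ecount n a d - 1, hkn⟩ : Fin n) ≤ ks := by
    simp only [Fin.le_def]
    omega
  have := pfun_mono n a hle
  omega

lemma mul_ecount_le (a : Fin n → ℕ)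
    (hcond : ∀ k : ℕ, k ≤ n → m * k ≤ n * Spre n a k) (d : ℕ) :
    (m + n) * ecount n a d ≤ n * d := by
  rcases Nat.eq_zero_or_pos (ecount n a d) with he0 | he0
  · simp [he0]
  · obtain ⟨hkn, hple⟩ := ecount_ge_bound n a d he0
    have hed : ecount n a d ≤ d := ecount_le n a d
    have hp : pfun n a ⟨ecount n a d - 1, hkn⟩ = (ecount n a d - 1) + Spre n a (ecount n a d) := by
      unfold pfun
      simp only [Fin.val_mk]
      rw [Nat.sub_add_cancel he0]
    rw [hp] at hple
    have hspre : ecount n a d + Spre n a (ecount n a d) ≤ d := by omega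
    have h1 : m * ecount n a d ≤ n * Spre n a (ecount n a d) := hcond _ (by
      have := ecount_le n a n
      have : ecount n a d ≤ n := by
        unfold ecount
        calc (Finset.univ.filter (fun k : Fin n => pfun n a k < d)).card
            ≤ (Finset.univ : Finset (Fin n)).card := Finset.card_le_card (Finset.filter_subset _ _)
          _ = n := by simp
      omega)
    calc (m + n) * ecount n a d = m * ecount n a d + n * ecount n a d := by ring
      _ ≤ n * Spre n a (ecount n a d) + n * ecount n a d := Nat.add_le_add_right h1 _
      _ = n * (Spre n a (ecount n a d) + ecount n a d) := by ring
      _ ≤ n * d := Nat.mul_le_mul_left n (by omega)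

lemma g_toSet_le (a : Fin n → ℕ) (ha : ∑ i, a i = m)
    (hcond : ∀ k : ℕ, k ≤ n → m * k ≤ n * Spre n a k) {d : ℕ} (hd : d ≤ m + n) :
    g m n (toSet m n a) d ≤ 0 := by
  rw [g_count m n _ d hd, count_toSet m n a ha d]
  have := mul_ecount_le m n a hcond d
  have hcast : ((m+n : ℕ) : ℤ) * (ecount n a d : ℤ) ≤ (n : ℤ) * d := by exact_mod_cast this
  unfold ecount at hcast
  push_cast at hcast ⊢
  linarith

lemma isDyck_toSet (h : Nat.Coprime m n) (a : Fin n → ℕ) (ha : ∑ i, a i = m)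
    (hcond : ∀ k : ℕ, k ≤ n → m * k ≤ n * Spre n a k) :
    IsDyck m n (toSet m n a) := by
  intro d hd0 hdN
  have hle := g_toSet_le m n a ha hcond (le_of_lt hdN)
  have hne : g m n (toSet m n a) d ≠ 0 := by
    have := no_return m n h (toSet m n a) 0 d hd0 hdN
    rwa [Nat.zero_add, g_zero] at this
  exact lt_of_le_of_ne hle hne

lemma toSet_inj (a a' : Fin n → ℕ) (ha : ∑ i, a i = m) (ha' : ∑ i, a' i = m)
    (hset : toSet m n a = toSet m n a') : a = a' := by
  have hE : ∀ d, ecount n a d = ecount n a' d := by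
    intro d
    unfold ecount
    rw [← count_toSet m n a ha d, ← count_toSet m n a' ha' d, hset]
  have hkey : ∀ (b b' : Fin n → ℕ), (∀ d, ecount n b d = ecount n b' d) →
      ∀ k : Fin n, ¬ (pfun n b k < pfun n b' k) := by
    intro b b' hEb k hlt
    have h1 : ecount n b (pfun n b k + 1) ≥ k.val + 1 := by
      unfold ecount
      have hsub : Finset.univ.filter (fun k' : Fin n => k'.val < k.val + 1)
          ⊆ Finset.univ.filter (fun k' : Fin n => pfun n b k' < pfun n b k + 1) := by
        intro x hx
        simp only [Finset.mem_filter, Finset.mem_univ, true_and] at hx ⊢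
        have : x ≤ k := by simp only [Fin.le_def]; omega
        have := pfun_mono n b this
        omega
      have := Finset.card_le_card hsub
      rwa [card_filter_val_lt n (k.val + 1) k.isLt] at this
    have h2 : ecount n b' (pfun n b k + 1) ≤ k.val := by
      unfold ecount
      have hsub : Finset.univ.filter (fun k' : Fin n => pfun n b' k' < pfun n b k + 1)
          ⊆ Finset.univ.filter (fun k' : Fin n => k'.val < k.val) := by
        intro x hx
        simp only [Finset.mem_filter, Finset.mem_univ, true_and] at hx ⊢
        by_contra hge
        have : k ≤ x := by simp only [Fin.le_def]; omega
        have := pfun_mono n b' this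
        omega
      have := Finset.card_le_card hsub
      rwa [card_filter_val_lt n k.val (le_of_lt k.isLt)] at this
    rw [hEb] at h1
    omega
  have hp : ∀ k : Fin n, pfun n a k = pfun n a' k := by
    intro k
    have h1 := hkey a a' hE k
    have h2 := hkey a' a (fun d => (hE d).symm) k
    omega
  have hS : ∀ k : ℕ, k < n → Spre n a (k + 1) = Spre n a' (k + 1) := by
    intro k hk
    have := hp ⟨k, hk⟩
    unfold pfun at this
    simp only [Fin.val_mk] at this
    omega
  funext k
  have h1 := Spre_succ n a k.isLt
  have h2 := Spre_succ n a' k.isLt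
  have h3 := hS k.val k.isLt
  have h4 : Spre n a k.val = Spre n a' k.val := by
    rcases Nat.eq_zero_or_pos k.val with h0 | h0
    · rw [h0, Spre_zero, Spre_zero]
    · have := hS (k.val - 1) (by omega)
      rwa [Nat.sub_add_cancel h0] at this
  have h5 : (⟨k.val, k.isLt⟩ : Fin n) = k := Fin.eta k k.isLt
  rw [h5] at h1 h2
  omega


lemma g_total (s : Finset (Fin (m+n))) (hs : s.card = n) : g m n s (m+n) = 0 := by
  have := g_period m n s hs 0
  rwa [Nat.zero_add, g_zero] at this

lemma last_mem (hm : 0 < m) (hn : 0 < n) (s : Finset (Fin (m+n))) (hs : s.card = n)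
    (hd : IsDyck m n s) : ((m + n - 1 : ℕ) : Fin (m+n)) ∈ s := by
  have hN2 : 2 ≤ m + n := by omega
  have hneg : g m n s (m + n - 1) < 0 := hd _ (by omega) (by omega)
  have hsucc := g_succ m n s (m + n - 1)
  rw [show m + n - 1 + 1 = m + n from by omega] at hsucc
  rw [g_total m n s hs] at hsucc
  by_contra hmem
  have : stepv m n s ((m + n - 1 : ℕ) : Fin (m+n)) = -(n : ℤ) := by
    simp [stepv, hmem]
  rw [this] at hsucc
  have : (0:ℤ) < n := by exact_mod_cast hn
  linarith

lemma toSet_surj (h : Nat.Coprime m n) (hm : 0 < m) (hn : 0 < n)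
    (s : Finset (Fin (m+n))) (hs : s.card = n) (hd : IsDyck m n s) :
    ∃ a : Fin n → ℕ, (∑ i, a i = m) ∧ (∀ k : ℕ, k ≤ n → m * k ≤ n * Spre n a k) ∧
      toSet m n a = s := by
  classical
  set q := s.orderEmbOfFin hs with hq
  have hqrange : Set.range q = ↑s := by
    have := s.range_orderEmbOfFin hs
    rw [← hq] at this
    exact this
  have hqmem : ∀ i, q i ∈ s := by
    intro i
    have := s.orderEmbOfFin_mem hs i
    rw [← hq] at this
    exact this
  -- lower bound
  have qlb : ∀ j (hj : j < n), j ≤ (q ⟨j, hj⟩).val := by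
    intro j
    induction j with
    | zero => intro hj; exact Nat.zero_le _
    | succ j ih =>
        intro hj
        have hj' : j < n := by omega
        have hlt : q ⟨j, hj'⟩ < q ⟨j+1, hj⟩ := by
          apply q.strictMono
          simp [Fin.lt_def]
        have := ih hj'
        have := Fin.lt_def.mp hlt
        omega
  -- q is the largest at n-1
  have hlast : ∀ hn' : n - 1 < n, (q ⟨n - 1, hn'⟩).val = m + n - 1 := by
    intro hn'
    have hmem := last_mem m n hm hn s hs hd
    have hval : ((m + n - 1 : ℕ) : Fin (m+n)).val = m + n - 1 :=
      Fin.val_cast_of_lt (by omega)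
    have hrange : ∃ i, q i = ((m + n - 1 : ℕ) : Fin (m+n)) := by
      have : ((m + n - 1 : ℕ) : Fin (m+n)) ∈ Set.range q := by
        rw [hqrange]; exact_mod_cast hmem
      exact this
    obtain ⟨i, hi⟩ := hrange
    have hile : i ≤ ⟨n - 1, hn'⟩ := by
      simp only [Fin.le_def]
      have := i.isLt
      omega
    have hmono : q i ≤ q ⟨n - 1, hn'⟩ := q.monotone hile
    have h1 : m + n - 1 ≤ (q ⟨n - 1, hn'⟩).val := by
      rw [hi] at hmono
      have := Fin.le_def.mp hmono
      omega
    have h2 := (q ⟨n - 1, hn'⟩).isLt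
    omega
  -- cumulative data
  set c : ℕ → ℕ := fun k => if hk : k < n then (q ⟨k, hk⟩).val + 1 - (k+1) else m with hc
  set c' : ℕ → ℕ := fun k => match k with | 0 => 0 | (k+1) => c k with hc'
  set a : Fin n → ℕ := fun k => c k.val - c' k.val with haa
  have cmono : ∀ k, k + 1 < n → c k ≤ c (k+1) := by
    intro k hk
    have hk' : k < n := by omega
    have hlt : q ⟨k, hk'⟩ < q ⟨k+1, hk⟩ := by
      apply q.strictMono
      simp [Fin.lt_def]
    have hv := Fin.lt_def.mp hlt
    have := qlb k hk'
    simp only [hc, dif_pos hk', dif_pos hk]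
    omega
  have hc'le : ∀ k, k < n → c' k ≤ c k := by
    intro k hk
    match k with
    | 0 => exact Nat.zero_le _
    | (k+1) => exact cmono k hk
  have hc'succ : ∀ k, c' (k+1) = c k := fun k => rfl
  have hSeq : ∀ k, k ≤ n → Spre n a k = c' k := by
    intro k
    induction k with
    | zero => intro _; rw [Spre_zero]
    | succ k ih =>
        intro hk
        have hk' : k < n := by omega
        rw [Spre_succ n a hk', ih (by omega)]
        have hav : a ⟨k, hk'⟩ = c k - c' k := rfl
        have h3 := hc'le k hk'
        rw [hc'succ k, hav]
        omega
  have hcn : c (n-1) = m := by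
    have hn' : n - 1 < n := by omega
    have := hlast hn'
    simp only [hc, dif_pos hn']
    omega
  have hsum : ∑ i, a i = m := by
    rw [← Spre_of_le n a (le_refl n), hSeq n (le_refl n)]
    have hz : n = (n-1) + 1 := by omega
    rw [hz, hc'succ]
    exact hcn
  -- the pfun values
  have hpq : ∀ k : Fin n, pfun n a k = (q k).val := by
    intro k
    have hk := k.isLt
    unfold pfun
    rw [hSeq (k.val + 1) (by omega), hc'succ]
    have hql : k.val ≤ (q k).val := by
      have := qlb k.val hk
      rwa [Fin.eta] at this
    have hcv : c k.val = (q k).val + 1 - (k.val + 1) := by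
      simp only [hc, dif_pos hk, Fin.eta]
    rw [hcv]
    omega
  refine ⟨a, hsum, ?_, ?_⟩
  · -- the dominance condition
    intro k hk
    rcases Nat.eq_zero_or_pos k with rfl | hk0
    · simp
    have hK : k - 1 < n := by omega
    set d : ℕ := (q ⟨k - 1, hK⟩).val + 1 with hdd
    have hkd : k ≤ d := by
      have := qlb (k-1) hK
      omega
    have hSval : Spre n a k = d - k := by
      rw [hSeq k hk]
      have hz : k = (k - 1) + 1 := by omega
      rw [hz, hc'succ]
      simp only [hc, dif_pos hK]
      omega
    rw [hSval]
    have hdN : d ≤ m + n := by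
      have := (q ⟨k - 1, hK⟩).isLt
      omega
    rcases eq_or_lt_of_le hdN with hdeq | hdlt
    · -- d = m + n forces k = n
      have hkn : k = n := by
        have hn' : n - 1 < n := by omega
        have h1 := hlast hn'
        have h2 : (q ⟨k-1, hK⟩).val = (q ⟨n-1, hn'⟩).val := by omega
        have h3 : (⟨k-1, hK⟩ : Fin n) = ⟨n-1, hn'⟩ := q.injective (Fin.ext h2)
        have := congrArg Fin.val h3
        simp only [Fin.val_mk] at this
        omega
      rw [hkn]
      have hdm : d - n = m := by omega
      rw [hdm, Nat.mul_comm]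
    · -- d < m + n : use the Dyck property
      have hgneg : g m n s d < 0 := hd d (by omega) hdlt
      rw [g_count m n s d (le_of_lt hdlt)] at hgneg
      have hF : (s.filter (fun x => x.val < d)).card = k := by
        have himg : s.filter (fun x => x.val < d)
            = (Finset.univ.filter (fun i : Fin n => i.val < k)).image q := by
          ext x
          simp only [Finset.mem_filter, Finset.mem_image, Finset.mem_univ, true_and]
          constructor
          · rintro ⟨hxs, hxd⟩
            have : x ∈ Set.range q := by
              rw [hqrange]; exact_mod_cast hxs
            obtain ⟨i, rfl⟩ := this
            refine ⟨i, ?_, rfl⟩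
            have hle : q i ≤ q ⟨k-1, hK⟩ := by
              rw [Fin.le_def]
              omega
            have h5 := q.le_iff_le.mp hle
            have h6 := Fin.le_def.mp h5
            simp only [Fin.val_mk] at h6
            omega
          · rintro ⟨i, hik, rfl⟩
            refine ⟨hqmem i, ?_⟩
            have hle : i ≤ (⟨k-1, hK⟩ : Fin n) := by
              rw [Fin.le_def]
              simp only [Fin.val_mk]
              omega
            have h5 := q.monotone hle
            have h6 := Fin.le_def.mp h5
            omega
        rw [himg, Finset.card_image_of_injective _ q.injective,
          card_filter_val_lt n k hk]
      rw [hF] at hgneg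
      have hnat : (m + n) * k < n * d := by
        have : ((m+n : ℕ) : ℤ) * k < (n : ℤ) * d := by push_cast at hgneg ⊢; linarith
        exact_mod_cast this
      have hsplit : n * (d - k) + n * k = n * d := by
        rw [← Nat.mul_add, Nat.sub_add_cancel hkd]
      have hmk : (m + n) * k = m * k + n * k := by ring
      omega
  · -- toSet a = s
    ext x
    rw [mem_toSet m n a hsum]
    constructor
    · rintro ⟨k, hk⟩
      rw [hpq k] at hk
      have hx : q k = x := Fin.ext hk
      rw [← hx]
      exact hqmem k
    · intro hxs
      have : x ∈ Set.range q := by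
        rw [hqrange]; exact_mod_cast hxs
      obtain ⟨i, rfl⟩ := this
      exact ⟨i, hpq i⟩

lemma card_part1 (h : Nat.Coprime m n) (hm : 0 < m) (hn : 0 < n) :
    Nat.card {a : Fin n → ℕ //
        (∑ i, a i) = m ∧
        ∀ k : ℕ, k ≤ n →
          m * k ≤ n * ∑ i ∈ Finset.univ.filter (fun i : Fin n => i.val < k), a i}
      = Nat.card {s : Finset (Fin (m+n)) // s.card = n ∧ IsDyck m n s} := by
  refine Nat.card_eq_of_bijective (fun a => ⟨toSet m n a.1,
        card_toSet m n a.1 a.2.1,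
        isDyck_toSet m n h a.1 a.2.1 a.2.2⟩) ⟨?_, ?_⟩
  · rintro ⟨a, ha, hca⟩ ⟨a', ha', hca'⟩ heq
    have := congrArg Subtype.val heq
    simp only at this
    exact Subtype.ext (toSet_inj m n a a' ha ha' this)
  · rintro ⟨t, htc, htd⟩
    obtain ⟨a, ha, hcond, hset⟩ := toSet_surj m n h hm hn t htc htd
    exact ⟨⟨a, ha, hcond⟩, Subtype.ext hset⟩

lemma card_part2 (h : Nat.Coprime m n) :
    Nat.card {s : Finset (Fin (m+n)) // s.card = n ∧ IsDyck m n s} * (m + n)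
      = Nat.card {s : Finset (Fin (m+n)) // s.card = n} := by
  have e : Nat.card ({s : Finset (Fin (m+n)) // s.card = n ∧ IsDyck m n s} × Fin (m+n))
      = Nat.card {s : Finset (Fin (m+n)) // s.card = n} := by
    refine Nat.card_eq_of_bijective (fun p => ⟨unshiftF m n p.2 p.1.1, by
          rw [card_unshiftF]; exact p.1.2.1⟩) ⟨?_, ?_⟩
    · rintro ⟨⟨s, hsc, hsd⟩, r⟩ ⟨⟨s', hsc', hsd'⟩, r'⟩ heq
      have hv : unshiftF m n r s = unshiftF m n r' s' := congrArg Subtype.val heq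
      have htc : (unshiftF m n r s).card = n := by rw [card_unshiftF]; exact hsc
      have h1 : shiftF m n r (unshiftF m n r s) = s := shiftF_unshiftF m n r s
      have h2 : shiftF m n r' (unshiftF m n r s) = s' := by
        rw [hv, shiftF_unshiftF]
      have hrr : r = r' := by
        apply isDyck_shiftF_unique m n h (unshiftF m n r s) htc
        · rw [h1]; exact hsd
        · rw [h2]; exact hsd'
      have hss : s = s' := by rw [← h1, ← h2, hrr]
      subst hrr
      subst hss
      rfl
    · rintro ⟨t, htc⟩
      obtain ⟨r, hr⟩ := exists_shiftF_isDyck m n h t htc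
      refine ⟨⟨⟨shiftF m n r t, by rw [card_shiftF]; exact htc, hr⟩, r⟩, ?_⟩
      exact Subtype.ext (unshiftF_shiftF m n r t)
  rw [Nat.card_prod, Nat.card_eq_fintype_card (α := Fin (m+n)), Fintype.card_fin] at e
  exact e

lemma card_part3 :
    Nat.card {s : Finset (Fin (m+n)) // s.card = n} = (m + n).choose n := by
  rw [Nat.card_eq_fintype_card, Fintype.card_finset_len, Fintype.card_fin]

end DyckCount

/-- An (m,n)-Dyck path encoded by its column data: `a i` is the number of south
steps in column `i` (so the path does `a 0` south steps, an east step, `a 1`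
south steps, an east step, ...). The path starts at `(0,m)` (total sum `m`) and
stays weakly below the diagonal `m*x + n*y = m*n`, which is equivalent to
`m * k ≤ n * (a 0 + ⋯ + a (k-1))` for all `k ≤ n`. -/
theorem dyck_count (m n : ℕ) (hm : 0 < m) (hn : 0 < n) (h : Nat.Coprime m n) :
    Nat.card {a : Fin n → ℕ //
        (∑ i, a i) = m ∧
        ∀ k : ℕ, k ≤ n →
          m * k ≤ n * ∑ i ∈ Finset.univ.filter (fun i : Fin n => i.val < k), a i}
      * (m + n) = Nat.choose (m + n) m := by

  haveI : NeZero (m + n) := ⟨by omega⟩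
  rw [DyckCount.card_part1 m n h hm hn, DyckCount.card_part2 m n h,
    DyckCount.card_part3 m n, ← Nat.choose_symm_add]
end

section
/- For positive integers m, n, r with gcd(m,n) = 1, the number of rank r semistandard (m,n)-parking functions equals (1/n) * binomial(nr + m - 1, m). -/
open Finset

section Cycle

variable {m n : ℕ}

/-- The key "cycle lemma": for a periodic sequence `b` with period sum `m` coprime to `n`,
there is a unique starting point `t < n` from which all partial sums satisfy the rational
Dyck condition. -/
lemma cycle_lemma (hn : 0 < n) (hco : Nat.Coprime m n) (b : ℕ → ℕ)
    (hb : ∀ j, b (j + n) = b j) (hs : ∑ i ∈ range n, b i = m) :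
    ∃! t, t < n ∧ ∀ k ≤ n, m * k ≤ n * ∑ i ∈ range k, b (t + i) := by
  set S : ℕ → ℕ := fun k => ∑ i ∈ range k, b i with hS
  set H : ℕ → ℤ := fun k => (n : ℤ) * S k - (m : ℤ) * k with hH
  have hSadd : ∀ t k, S (t + k) = S t + ∑ i ∈ range k, b (t + i) := fun t k =>
    Finset.sum_range_add b t k
  have hSper : ∀ k, S (k + n) = S k + m := by
    intro k
    induction k with
    | zero => simpa [hS] using hs
    | succ k ih =>
        have e : k + 1 + n = (k + n) + 1 := by omega
        rw [e]
        simp only [hS, Finset.sum_range_succ] at ih ⊢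
        rw [ih, hb]
        ring
  have hHper : ∀ k, H (k + n) = H k := by
    intro k
    simp only [hH, hSper k]
    push_cast
    ring
  -- the Dyck condition from start `t` is equivalent to `H t ≤ H (t + k)`
  have hDy : ∀ t, (∀ k ≤ n, m * k ≤ n * ∑ i ∈ range k, b (t + i)) ↔
      (∀ k ≤ n, H t ≤ H (t + k)) := by
    intro t
    have key : ∀ k, (m * k ≤ n * ∑ i ∈ range k, b (t + i)) ↔ H t ≤ H (t + k) := by
      intro k
      rw [hH]
      simp only
      rw [hSadd t k]
      push_cast
      constructor <;> intro h' <;> nlinarith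
    exact forall₂_congr (fun k _ => key k)
  -- distinctness of H values
  have hdist : ∀ s t, s < n → t < n → H s = H t → s = t := by
    intro s t hsn htn he
    have hdvd : (n : ℤ) ∣ (m : ℤ) * ((s : ℤ) - t) := by
      have : (m : ℤ) * ((s : ℤ) - t) = (n : ℤ) * ((S s : ℤ) - S t) := by
        simp only [hH] at he
        linarith
      exact ⟨_, this⟩
    have hcop : IsCoprime (n : ℤ) (m : ℤ) :=
      (Nat.isCoprime_iff_coprime.mpr hco.symm)
    have hdvd2 : (n : ℤ) ∣ ((s : ℤ) - t) := hcop.dvd_of_dvd_mul_left hdvd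
    have habs : ((s : ℤ) - t).natAbs < n := by omega
    have := Int.natAbs_dvd.mpr hdvd2
    have hn2 : (n : ℤ) ∣ (((s : ℤ) - t).natAbs : ℤ) := Int.dvd_natAbs.mpr hdvd2
    have : n ∣ ((s : ℤ) - t).natAbs := by exact_mod_cast hn2
    have : ((s : ℤ) - t).natAbs = 0 := by
      rcases Nat.eq_zero_or_pos (((s : ℤ) - t).natAbs) with h0 | hp
      · exact h0
      · exact absurd (Nat.le_of_dvd hp this) (by omega)
    omega
  -- the minimizer
  obtain ⟨t, htmem, htmin⟩ := Finset.exists_min_image (range n) H ⟨0, mem_range.mpr hn⟩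
  rw [mem_range] at htmem
  refine ⟨t, ⟨htmem, ?_⟩, ?_⟩
  · rw [hDy]
    intro k hk
    by_cases hlt : t + k < n
    · exact htmin _ (mem_range.mpr hlt)
    · have h1 : t + k - n < n := by omega
      have h2 : H (t + k) = H (t + k - n) := by
        have e : t + k = (t + k - n) + n := by omega
        conv_lhs => rw [e]
        exact hHper _
      rw [h2]
      exact htmin _ (mem_range.mpr h1)
  · rintro s ⟨hsn, hsDy⟩
    rw [hDy] at hsDy
    by_contra hne
    -- pick k with s + k ≡ t (mod n), 0 < k ≤ n
    have hst : H s ≤ H t := by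
      rcases le_or_gt s t with hle | hlt
      · have hk : t - s ≤ n := by omega
        have := hsDy (t - s) hk
        rwa [show s + (t - s) = t by omega] at this
      · have hk : t + n - s ≤ n := by omega
        have := hsDy (t + n - s) hk
        rwa [show s + (t + n - s) = t + n by omega, hHper] at this
    have hts : H t ≤ H s := htmin _ (mem_range.mpr hsn)
    exact hne (hdist s t hsn htmem (le_antisymm hst hts))

end Cycle

section Shift

open Fin.NatCast

variable {n r : ℕ} [NeZero n]

private def shiftF (t : Fin n) (a : Fin n → Fin r → ℕ) : Fin n → Fin r → ℕ :=
  fun i => a (i + t)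

private lemma shiftF_shiftF (s t : Fin n) (a : Fin n → Fin r → ℕ) :
    shiftF s (shiftF t a) = shiftF (s + t) a := by
  funext i
  simp [shiftF, add_assoc]

private lemma shiftF_zero (a : Fin n → Fin r → ℕ) : shiftF 0 a = a := by
  funext i
  simp [shiftF]

private lemma sum_shiftF (t : Fin n) (a : Fin n → Fin r → ℕ) :
    ∑ i, ∑ j, shiftF t a i j = ∑ i, ∑ j, a i j :=
  Fintype.sum_equiv (Equiv.addRight t) _ _ (fun i => rfl)

/-- column sums read as a periodic function on ℕ -/
private def colF (a : Fin n → Fin r → ℕ) : ℕ → ℕ := fun k => ∑ j, a (k : Fin n) j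

private lemma colF_period (a : Fin n → Fin r → ℕ) (k : ℕ) : colF a (k + n) = colF a k := by
  simp [colF, Nat.cast_add]

private lemma colF_sum (a : Fin n → Fin r → ℕ) :
    ∑ i ∈ range n, colF a i = ∑ i, ∑ j, a i j := by
  rw [← Fin.sum_univ_eq_sum_range (fun i => colF a i) n]
  refine Finset.sum_congr rfl fun i _ => ?_
  simp [colF, Fin.cast_val_eq_self]

private lemma filter_sum_eq (g : Fin n → ℕ) (k : ℕ) (hk : k ≤ n) :
    ∑ i ∈ Finset.univ.filter (fun i : Fin n => i.val < k), g i
      = ∑ j ∈ range k, g (j : Fin n) := by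
  refine Finset.sum_nbij' (fun i => i.val) (fun j => (j : Fin n)) ?_ ?_ ?_ ?_ ?_
  · intro i hi
    simp only [mem_filter] at hi
    exact mem_range.mpr hi.2
  · intro j hj
    rw [mem_range] at hj
    simp only [mem_filter, mem_univ, true_and]
    rw [Fin.val_natCast, Nat.mod_eq_of_lt (lt_of_lt_of_le hj hk)]
    exact hj
  · intro i _
    exact Fin.cast_val_eq_self i
  · intro j hj
    rw [mem_range] at hj
    show ((j : Fin n) : ℕ) = j
    rw [Fin.val_natCast]
    exact Nat.mod_eq_of_lt (lt_of_lt_of_le hj hk)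
  · intro i _
    show g i = g ((i.val : Fin n))
    rw [Fin.cast_val_eq_self i]

/-- The Dyck condition of a shifted array as a condition on the periodic column function. -/
private lemma dyck_shift_iff (m : ℕ) (a : Fin n → Fin r → ℕ) (t : Fin n) :
    (∀ k : ℕ, k ≤ n →
        m * k ≤ n * ∑ i ∈ Finset.univ.filter (fun i : Fin n => i.val < k),
          ∑ j, shiftF t a i j) ↔
      (∀ k ≤ n, m * k ≤ n * ∑ i ∈ range k, colF a (t.val + i)) := by
  refine forall₂_congr fun k hk => ?_
  have : ∑ i ∈ Finset.univ.filter (fun i : Fin n => i.val < k), ∑ j, shiftF t a i j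
      = ∑ i ∈ range k, colF a (t.val + i) := by
    rw [filter_sum_eq (fun i => ∑ j, shiftF t a i j) k hk]
    refine Finset.sum_congr rfl fun j hj => ?_
    simp only [shiftF, colF]
    congr 1
    rw [Nat.cast_add, Fin.cast_val_eq_self, add_comm (t : Fin n)]
  rw [this]

end Shift

/-- A rank `r` semistandard (m,n)-parking function is encoded by an array
`a : Fin n → Fin r → ℕ`, where `a i j` is the number of south steps in column
`i` of the underlying Dyck path carrying label `j+1`.  Since the labels within
a column are listed weakly increasingly going down, this encoding is in
bijection with rank `r` semistandard (m,n)-parking functions.  The conditions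
are: total number of south steps is `m`, and the Dyck condition
`m * k ≤ n * (row sums up to k)` for all `k ≤ n`.  The count equals
`(1/n) * choose (n*r + m - 1) m`. -/
theorem sspf_count (m n r : ℕ) (hm : 0 < m) (hn : 0 < n) (hr : 0 < r)
    (h : Nat.Coprime m n) :
    Nat.card {a : Fin n → Fin r → ℕ //
        (∑ i, ∑ j, a i j) = m ∧
        ∀ k : ℕ, k ≤ n →
          m * k ≤ n * ∑ i ∈ Finset.univ.filter (fun i : Fin n => i.val < k), ∑ j, a i j}
      * n = Nat.choose (n * r + m - 1) m := by
  haveI : NeZero n := ⟨hn.ne'⟩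
  set D := {a : Fin n → Fin r → ℕ //
        (∑ i, ∑ j, a i j) = m ∧
        ∀ k : ℕ, k ≤ n →
          m * k ≤ n * ∑ i ∈ Finset.univ.filter (fun i : Fin n => i.val < k), ∑ j, a i j}
    with hD
  set T := {a : Fin n → Fin r → ℕ // (∑ i, ∑ j, a i j) = m} with hT
  -- the map
  set Ψ : D × Fin n → T := fun p => ⟨shiftF p.2 p.1.1, by
    rw [sum_shiftF]; exact p.1.2.1⟩ with hΨ
  -- uniqueness statement from cycle lemma, as needed
  have hcyc : ∀ a : T, ∃! t, t < n ∧
      ∀ k ≤ n, m * k ≤ n * ∑ i ∈ range k, colF a.1 (t + i) :=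
    fun a => cycle_lemma hn h (colF a.1) (colF_period a.1)
      (by rw [colF_sum]; exact a.2)
  have hbij : Function.Bijective Ψ := by
    constructor
    · rintro ⟨⟨d, hd⟩, t⟩ ⟨⟨d', hd'⟩, t'⟩ heq
      have heq' : shiftF t d = shiftF t' d' := congrArg Subtype.val heq
      -- d' = shiftF (t - t') d
      have hd'eq : d' = shiftF (t - t') d := by
        have : shiftF (-t') (shiftF t' d') = shiftF (-t') (shiftF t d) := by rw [heq']
        rw [shiftF_shiftF, shiftF_shiftF, neg_add_cancel, shiftF_zero] at this
        rw [this, sub_eq_neg_add]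
      -- both 0 and (t - t') are valid starts for colF d
      have hT0 : (⟨d, hd.1⟩ : T) = ⟨d, hd.1⟩ := rfl
      obtain ⟨u, _, huniq⟩ := hcyc ⟨d, hd.1⟩
      have h0 : (0 : ℕ) < n ∧ ∀ k ≤ n, m * k ≤ n * ∑ i ∈ range k, colF d (0 + i) := by
        refine ⟨hn, ?_⟩
        have := (dyck_shift_iff m d 0).mp (by rw [shiftF_zero]; exact hd.2)
        simpa using this
      have hu : ((t - t' : Fin n)).val < n ∧
          ∀ k ≤ n, m * k ≤ n * ∑ i ∈ range k, colF d (((t - t' : Fin n)).val + i) := by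
        refine ⟨(t - t').isLt, ?_⟩
        exact (dyck_shift_iff m d (t - t')).mp (by rw [← hd'eq]; exact hd'.2)
      have := (huniq _ h0).trans (huniq _ hu).symm
      have htt' : (t - t' : Fin n) = 0 := by
        apply Fin.ext
        simpa using this.symm
      have htt : t = t' := by
        have := sub_eq_zero.mp htt'
        exact this
      subst htt
      have hdd : d = d' := by
        have : shiftF (-t) (shiftF t d) = shiftF (-t) (shiftF t d') := by rw [heq']
        rwa [shiftF_shiftF, shiftF_shiftF, neg_add_cancel, shiftF_zero, shiftF_zero] at this
      subst hdd
      rfl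
    · rintro ⟨a, ha⟩
      obtain ⟨t, ⟨htn, hDy⟩, _⟩ := hcyc ⟨a, ha⟩
      set tf : Fin n := ⟨t, htn⟩ with htf
      have hdDyck : ∀ k : ℕ, k ≤ n →
          m * k ≤ n * ∑ i ∈ Finset.univ.filter (fun i : Fin n => i.val < k),
            ∑ j, shiftF tf a i j :=
        (dyck_shift_iff m a tf).mpr hDy
      refine ⟨⟨⟨shiftF tf a, ⟨by rw [sum_shiftF]; exact ha, hdDyck⟩⟩, -tf⟩, ?_⟩
      apply Subtype.ext
      show shiftF (-tf) (shiftF tf a) = a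
      rw [shiftF_shiftF, neg_add_cancel, shiftF_zero]
  have hcard : Nat.card (D × Fin n) = Nat.card T :=
    Nat.card_congr (Equiv.ofBijective Ψ hbij)
  rw [Nat.card_prod, Nat.card_eq_fintype_card (α := Fin n), Fintype.card_fin] at hcard
  rw [hcard]
  -- now count T
  have e1 : {P : Fin n × Fin r → ℕ // ∑ p, P p = m} ≃ T := by
    refine (Equiv.curry (Fin n) (Fin r) ℕ).subtypeEquiv fun P => ?_
    rw [Fintype.sum_prod_type]
    rfl
  have e2 : Sym (Fin n × Fin r) m ≃ T :=
    (Sym.equivNatSumOfFintype (Fin n × Fin r) m).trans e1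
  rw [← Nat.card_congr e2, Nat.card_eq_fintype_card,
    Sym.card_sym_eq_choose, Fintype.card_prod, Fintype.card_fin, Fintype.card_fin]
end

section
/- Suppose gcd(m,n) = 1. Then the action of the cyclic group Z/nZ on the set of nonnegative integer n×r arrays with total sum m, given by cyclically shifting the first index (ρ·a)(i,j) = a(i+1 mod n, j), is a free action. Consequently the number of orbits is (1/n) * binomial(nr + m - 1, m). -/
open Fin.CommRing in
lemma period_iter {N : ℕ} (f : Fin (N+1) → ℕ) (p : Fin (N+1))
    (hf : ∀ i, f (i + p) = f i) : ∀ (c : ℕ) (i : Fin (N+1)), f (i + c • p) = f i := by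
  intro c
  induction c with
  | zero => simp
  | succ c ih =>
    intro i
    have : i + (c+1) • p = (i + p) + c • p := by
      rw [succ_nsmul]; ring
    rw [this, ih, hf]

open Fin.CommRing in
lemma aux_free {m N r : ℕ} (h : Nat.Coprime m (N+1)) (k : Fin (N+1)) (hk : k ≠ 0)
    (a : Fin (N+1) → Fin r → ℕ) (hsum : (∑ i, ∑ j, a i j) = m)
    (heq : (fun i j => a (i + k) j) = a) : False := by
  set f : Fin (N+1) → ℕ := fun i => ∑ j, a i j with hfdef
  have hf : ∀ i, f (i + k) = f i := by
    intro i
    simp only [hfdef]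
    exact Finset.sum_congr rfl fun j _ => congrFun (congrFun heq i) j
  have key := period_iter f k hf
  set g := Nat.gcd k.val (N+1) with hgdef
  have hgdvd : g ∣ N + 1 := Nat.gcd_dvd_right _ _
  have hkv : k.val ≠ 0 := by
    intro hkv; exact hk (Fin.ext (by simpa using hkv))
  have hglt : g < N + 1 :=
    lt_of_le_of_lt (Nat.le_of_dvd (Nat.pos_of_ne_zero hkv) (Nat.gcd_dvd_left _ _)) k.isLt
  -- Bezout: (g : Fin (N+1)) = k * gcdA
  have hb : (g : ℤ) = k.val * Nat.gcdA k.val (N+1) + (N+1) * Nat.gcdB k.val (N+1) :=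
    Nat.gcd_eq_gcd_ab _ _
  have hz : ((N : Fin (N+1)) + 1) = 0 := by
    rw [← Nat.cast_one (R := Fin (N+1)), ← Nat.cast_add, Fin.natCast_self]
  have hbf : (g : Fin (N+1)) = k * ((Nat.gcdA k.val (N+1) : ℤ) : Fin (N+1)) := by
    have := congrArg (fun z : ℤ => (z : Fin (N+1))) hb
    push_cast at this
    rw [hz] at this
    simpa [Fin.cast_val_eq_self] using this
  set c : ℕ := ((Nat.gcdA k.val (N+1) : ℤ) : Fin (N+1)).val with hcdef
  have hck : c • k = (g : Fin (N+1)) := by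
    rw [nsmul_eq_mul, hcdef, Fin.cast_val_eq_self, hbf, mul_comm]
  have hper : ∀ i, f (i + (g : Fin (N+1))) = f i := fun i => by
    rw [← hck]; exact key c i
  have keyg := period_iter f (g : Fin (N+1)) hper
  set d := (N+1) / g with hddef
  have hdg : d * g = N + 1 := Nat.div_mul_cancel hgdvd
  have hlt : ∀ (q : Fin d) (s : Fin g), s.val + g * q.val < N + 1 := by
    intro q s
    calc s.val + g * q.val < g + g * q.val := by have := s.isLt; omega
      _ = g * (q.val + 1) := by ring
      _ ≤ g * d := Nat.mul_le_mul_left _ q.isLt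
      _ = N + 1 := by rw [mul_comm]; exact hdg
  have hsum2 : (∑ i, f i) = ∑ p : Fin d × Fin g, f ((p.2.val + g * p.1.val : ℕ) : Fin (N+1)) := by
    refine (Fintype.sum_equiv ((finProdFinEquiv).trans (finCongr hdg)) _ _ ?_).symm
    intro p
    congr 1
    apply Fin.ext
    rw [Fin.val_natCast, Nat.mod_eq_of_lt (hlt p.1 p.2)]
    simp [finProdFinEquiv, Fin.coe_cast]
  have hinner : ∀ (q : Fin d) (s : Fin g),
      f ((s.val + g * q.val : ℕ) : Fin (N+1)) = f ((s.val : ℕ) : Fin (N+1)) := by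
    intro q s
    have : ((s.val + g * q.val : ℕ) : Fin (N+1))
        = ((s.val : ℕ) : Fin (N+1)) + q.val • ((g : ℕ) : Fin (N+1)) := by
      push_cast
      rw [nsmul_eq_mul]
      ring
    rw [this, keyg]
  have hddvd : d ∣ m := by
    refine ⟨∑ s : Fin g, f ((s.val : ℕ) : Fin (N+1)), ?_⟩
    rw [← hsum]
    show (∑ i, f i) = _
    rw [hsum2, Fintype.sum_prod_type]
    rw [Finset.sum_congr rfl fun q _ => Finset.sum_congr rfl fun s _ => hinner q s]
    rw [Finset.sum_const, Finset.card_univ, Fintype.card_fin, smul_eq_mul]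
  have hddvdn : d ∣ N + 1 := Nat.div_dvd_of_dvd hgdvd
  have : d ∣ 1 := h ▸ Nat.dvd_gcd hddvd hddvdn
  have hd1 : d = 1 := Nat.dvd_one.mp this
  rw [hd1, one_mul] at hdg
  omega

section
variable {m N r : ℕ}

abbrev Arr (m N r : ℕ) := {a : Fin (N+1) → Fin r → ℕ // (∑ i, ∑ j, a i j) = m}

def shiftA (k : Fin (N+1)) (a : Arr m N r) : Arr m N r :=
  ⟨fun i j => a.1 (i + k) j, by
    show (∑ i, ∑ j, a.1 (i + k) j) = m
    exact (Fintype.sum_equiv (Equiv.addRight k) _ _ (fun i => rfl)).trans a.2⟩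

lemma shiftA_zero (a : Arr m N r) : shiftA 0 a = a := by
  apply Subtype.ext; funext i j; simp [shiftA]

lemma shiftA_shiftA (k l : Fin (N+1)) (a : Arr m N r) :
    shiftA k (shiftA l a) = shiftA (k + l) a := by
  apply Subtype.ext; funext i j
  show a.1 (i + k + l) j = a.1 (i + (k + l)) j
  rw [add_assoc]

def RA (a b : Arr m N r) : Prop := ∃ k : Fin (N+1), ∀ i j, b.val i j = a.val (i + k) j

lemma RA_iff (a b : Arr m N r) : RA a b ↔ ∃ k, b = shiftA k a := by
  constructor
  · rintro ⟨k, hk⟩; exact ⟨k, Subtype.ext (funext fun i => funext fun j => hk i j)⟩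
  · rintro ⟨k, rfl⟩; exact ⟨k, fun i j => rfl⟩

lemma RA_equiv : Equivalence (RA (m := m) (N := N) (r := r)) := by
  constructor
  · intro a; exact (RA_iff a a).mpr ⟨0, (shiftA_zero a).symm⟩
  · intro a b hab
    obtain ⟨k, rfl⟩ := (RA_iff a b).mp hab
    exact (RA_iff _ _).mpr ⟨-k, by rw [shiftA_shiftA, neg_add_cancel, shiftA_zero]⟩
  · intro a b c hab hbc
    obtain ⟨k, rfl⟩ := (RA_iff a b).mp hab
    obtain ⟨l, rfl⟩ := (RA_iff _ _).mp hbc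
    exact (RA_iff _ _).mpr ⟨l + k, (shiftA_shiftA l k a)⟩

end

lemma card_aux (m N r : ℕ) (h : Nat.Coprime m (N+1)) :
    Nat.card (Quot (fun a b : {a : Fin (N+1) → Fin r → ℕ // (∑ i, ∑ j, a i j) = m} =>
        ∃ k : Fin (N+1), ∀ i j, b.val i j = a.val (i + k) j)) * (N+1)
      = Nat.choose ((N+1) * r + m - 1) m := by
  have free : ∀ (k : Fin (N+1)), k ≠ 0 → ∀ a : Arr m N r, shiftA k a ≠ a := by
    intro k hk a hfix
    exact aux_free h k hk a.1 a.2 (congrArg Subtype.val hfix)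
  -- the equivalence class map
  let Q := Quot (RA (m := m) (N := N) (r := r))
  let φ : Q × Fin (N+1) → Arr m N r := fun p => shiftA p.2 p.1.out
  have hmk : ∀ (k : Fin (N+1)) (a : Arr m N r), Quot.mk RA (shiftA k a) = Quot.mk RA a :=
    fun k a => (Quot.sound ((RA_iff a (shiftA k a)).mpr ⟨k, rfl⟩)).symm
  have hφbij : Function.Bijective φ := by
    constructor
    · rintro ⟨q, k⟩ ⟨q', k'⟩ hpq
      simp only [φ] at hpq
      have hq : q = q' := by
        have := congrArg (Quot.mk RA) hpq
        rwa [hmk, hmk, Quot.out_eq, Quot.out_eq] at this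
      subst hq
      have hkk : shiftA (-k' + k) q.out = q.out := by
        have := congrArg (shiftA (-k')) hpq
        rwa [shiftA_shiftA, shiftA_shiftA, neg_add_cancel, shiftA_zero] at this
      have : -k' + k = 0 := by
        by_contra hne
        exact free _ hne _ hkk
      have : k = k' := by
        have := congrArg (k' + ·) this
        simpa [← add_assoc] using this
      rw [this]
    · intro a
      have : Quot.mk RA (Quot.out (Quot.mk RA a)) = Quot.mk RA a := Quot.out_eq _
      have hra : RA (Quot.out (Quot.mk RA a)) a :=
        (RA_equiv.eqvGen_iff).mp ((Quot.eq).mp this)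
      obtain ⟨k, hk⟩ := (RA_iff _ _).mp hra
      exact ⟨(Quot.mk RA a, k), hk.symm⟩
  -- stars and bars
  have hcardA : Nat.card (Arr m N r) = Nat.choose ((N+1) * r + m - 1) m := by
    have e1 : Arr m N r ≃ {f : Fin (N+1) × Fin r → ℕ // (∑ x, f x) = m} :=
      Equiv.subtypeEquiv (Equiv.curry (Fin (N+1)) (Fin r) ℕ).symm
        (fun f => by simp [Fintype.sum_prod_type, Equiv.curry])
    have e2 : {f : Fin (N+1) × Fin r → ℕ // (∑ x, f x) = m} ≃ Sym (Fin (N+1) × Fin r) m :=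
      (Sym.equivNatSumOfFintype (Fin (N+1) × Fin r) m).symm
    rw [Nat.card_congr (e1.trans e2), Nat.card_eq_fintype_card, Sym.card_sym_eq_choose,
      Fintype.card_prod, Fintype.card_fin, Fintype.card_fin]
  have : Nat.card Q * (N+1) = Nat.card (Arr m N r) := by
    have hfin : Nat.card (Fin (N+1)) = N + 1 := by
      simp [Nat.card_eq_fintype_card]
    rw [← Nat.card_congr (Equiv.ofBijective φ hφbij), Nat.card_prod, hfin]
  rw [show (Quot fun a b : Arr m N r => ∃ k : Fin (N+1), ∀ i j, b.val i j = a.val (i + k) j) = Q from rfl]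
  rw [this, hcardA]


/-- The cyclic group `Z/nZ` acts on nonnegative integer `n × r` arrays with
total sum `m` by cyclically shifting the first index (here indexed by `Fin n`
with its modular addition).  If `gcd m n = 1` the action is free, and
consequently the number of orbits is `(1/n) * choose (n*r + m - 1) m`. -/
theorem cyclic_action_free_and_orbits (m n r : ℕ) (hm : 0 < m) (hn : 0 < n)
    (hr : 0 < r) (h : Nat.Coprime m n) :
    (∀ k : Fin n, k.val ≠ 0 → ∀ a : Fin n → Fin r → ℕ,
        (∑ i, ∑ j, a i j) = m → (fun i j => a (i + k) j) ≠ a) ∧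
    Nat.card (Quot (fun a b : {a : Fin n → Fin r → ℕ // (∑ i, ∑ j, a i j) = m} =>
        ∃ k : Fin n, ∀ i j, b.val i j = a.val (i + k) j)) * n
      = Nat.choose (n * r + m - 1) m := by
  obtain ⟨N, rfl⟩ : ∃ N, n = N + 1 := ⟨n - 1, by omega⟩
  constructor
  · intro k hk a hsum heq
    exact aux_free h k (fun h0 => hk (by simp [h0])) a hsum heq
  · exact card_aux m N r h
end

section
/- Let w = (w_1,...,w_r) be a composition of m (parts may be zero), and let f_w : Z → Z be the nondecreasing function with f_w(x+m) = f_w(x) + r that takes value i exactly on the window interval [w_1+...+w_{i-1}+1, w_1+...+w_i] within [1,m]. Let σ be an affine permutation of period m such that σ^{-1} is strictly increasing on f_w^{-1}(y) for every y ∈ Z. Then the set of inversions of σ equals the set of inversions of the composite function f_w ∘ σ; that is, for all i < j in Z, σ(j) < σ(i) if and only if f_w(σ(j)) < f_w(σ(i)). -/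
/-- Let `w` be a composition of `m` with `r` parts (zero parts allowed), and
`fw` the nondecreasing step function of weight `w`: it satisfies
`fw (x + m) = fw x + r` and takes value `i+1` exactly on the window interval
`(w₁+⋯+w_i, w₁+⋯+w_{i+1}]` inside `[1,m]` (0-indexed `i : Fin r`).  Let `σ` be
an affine permutation of period `m` (bijection of `ℤ` with `σ(x+m) = σ(x)+m`
and normalized window sum) which is a minimal-length coset representative,
i.e. `σ⁻¹` is strictly increasing on each fiber of `fw`.  Then the inversions
of `σ` coincide with the inversions of `fw ∘ σ`: for `i < j`,
`σ j < σ i ↔ fw (σ j) < fw (σ i)`. -/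
theorem inversions_eq (m r : ℕ) (hm : 0 < m) (hr : 0 < r)
    (w : Fin r → ℕ) (hw : (∑ i, w i) = m)
    (fw : ℤ → ℤ)
    (hfw_per : ∀ x : ℤ, fw (x + m) = fw x + r)
    (hfw_val : ∀ i : Fin r, ∀ x : ℤ,
      (∑ j ∈ Finset.univ.filter (fun j : Fin r => j.val < i.val), (w j : ℤ)) < x →
      x ≤ (∑ j ∈ Finset.univ.filter (fun j : Fin r => j.val ≤ i.val), (w j : ℤ)) →
      fw x = i.val + 1)
    (σ : ℤ → ℤ) (hbij : Function.Bijective σ)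
    (hper : ∀ x : ℤ, σ (x + m) = σ x + m)
    (hsum : 2 * (∑ x ∈ Finset.Icc (1 : ℤ) m, σ x) = m * (m + 1))
    (hmin : ∀ s t : ℤ, fw (σ s) = fw (σ t) → σ s < σ t → s < t) :
    ∀ i j : ℤ, i < j → (σ j < σ i ↔ fw (σ j) < fw (σ i)) := by
  classical
  set S : ℕ → ℤ := fun n => ∑ j ∈ Finset.univ.filter (fun j : Fin r => j.val < n), (w j : ℤ)
    with hSdef
  have hS_mono : ∀ a b : ℕ, a ≤ b → S a ≤ S b := by
    intro a b hab
    apply Finset.sum_le_sum_of_subset_of_nonneg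
    · intro j hj
      simp only [Finset.mem_filter, Finset.mem_univ, true_and] at *
      exact lt_of_lt_of_le hj hab
    · intro j _ _; positivity
  have hS0 : S 0 = 0 := by simp [hSdef]
  have hS_r : S r = (m : ℤ) := by
    have he : Finset.univ.filter (fun j : Fin r => j.val < r) = Finset.univ := by
      ext j; simp [j.isLt]
    simp only [hSdef, he]
    rw [← Nat.cast_sum, hw]
  have hval : ∀ i : Fin r, ∀ x : ℤ, S i.val < x → x ≤ S (i.val + 1) → fw x = (i.val : ℤ) + 1 := by
    intro i x h1 h2
    apply hfw_val i x h1
    have he : (Finset.univ.filter (fun j : Fin r => j.val ≤ i.val)) =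
        (Finset.univ.filter (fun j : Fin r => j.val < i.val + 1)) := by
      ext j; simp [Nat.lt_succ_iff]
    rw [he]; exact h2
  have hwin : ∀ x : ℤ, 1 ≤ x → x ≤ (m : ℤ) →
      ∃ n : ℕ, n < r ∧ S n < x ∧ x ≤ S (n + 1) ∧ fw x = (n : ℤ) + 1 := by
    intro x hx1 hxm
    set P : ℕ → Prop := fun k => S k < x with hPdef
    have hP0 : P 0 := by show S 0 < x; rw [hS0]; linarith
    set n := Nat.findGreatest P r with hn
    have hPn : P n := Nat.findGreatest_spec (Nat.zero_le r) hP0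
    have hnr : n ≤ r := Nat.findGreatest_le r
    have hnlt : n < r := by
      rcases lt_or_eq_of_le hnr with h | h
      · exact h
      · exfalso; rw [h] at hPn; have : S r < x := hPn; rw [hS_r] at this; linarith
    have hx2 : x ≤ S (n + 1) := by
      by_contra hcon
      push_neg at hcon
      exact Nat.findGreatest_is_greatest (Nat.lt_succ_self n) hnlt hcon
    exact ⟨n, hnlt, hPn, hx2, hval ⟨n, hnlt⟩ x hPn hx2⟩
  have hmono_loc : ∀ x y : ℤ, 1 ≤ x → x ≤ y → y ≤ (m : ℤ) → fw x ≤ fw y := by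
    intro x y hx hxy hy
    obtain ⟨nx, hnxr, hnx1, hnx2, hfx⟩ := hwin x hx (hxy.trans hy)
    obtain ⟨ny, hnyr, hny1, hny2, hfy⟩ := hwin y (hx.trans hxy) hy
    rw [hfx, hfy]
    have hle : nx ≤ ny := by
      by_contra hcon
      push_neg at hcon
      have := hS_mono (ny + 1) nx hcon
      linarith
    have : (nx : ℤ) ≤ (ny : ℤ) := by exact_mod_cast hle
    linarith
  have hper_k : ∀ k : ℤ, ∀ x : ℤ, fw (x + k * m) = fw x + k * r := by
    intro k
    induction k using Int.induction_on with
    | zero => intro x; simp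
    | succ k ih =>
      intro x
      have h1 := hfw_per (x + k * m)
      have h2 := ih x
      have he : x + ((k : ℤ) + 1) * m = x + k * m + m := by ring
      rw [he, h1, h2]; ring
    | pred k ih =>
      intro x
      have h1 := hfw_per (x + (-(k : ℤ) - 1) * m)
      have h2 := ih x
      have he : x + (-(k : ℤ) - 1) * m + m = x + -(k : ℤ) * m := by ring
      rw [he, h2] at h1
      linarith [h1]
  have hstep : ∀ x : ℤ, fw x ≤ fw (x + 1) := by
    intro x
    set k := (x - 1) / (m : ℤ) with hk
    set x0 := (x - 1) % (m : ℤ) + 1 with hx0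
    have hm0 : (m : ℤ) ≠ 0 := by exact_mod_cast hm.ne'
    have hmpos : (0 : ℤ) < m := by exact_mod_cast hm
    have h1 : 1 ≤ x0 := by
      have := Int.emod_nonneg (x - 1) hm0
      linarith
    have h2 : x0 ≤ (m : ℤ) := by
      have := Int.emod_lt_of_pos (x - 1) hmpos
      linarith
    have hdm := Int.mul_ediv_add_emod (x - 1) (m : ℤ)
    have hx : x = x0 + k * m := by
      have hc : (m : ℤ) * k = k * m := mul_comm _ _
      rw [hx0, hk]
      linarith [hdm, hc]
    rcases lt_or_eq_of_le h2 with hlt | heq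
    · have hx1 : x + 1 = (x0 + 1) + k * m := by linarith
      rw [hx1, hx, hper_k k x0, hper_k k (x0 + 1)]
      have := hmono_loc x0 (x0 + 1) h1 (by linarith) (by linarith)
      linarith
    · have hx1 : x + 1 = 1 + (k + 1) * m := by rw [hx, ← heq]; ring
      rw [hx1, hx, hper_k k x0, hper_k (k + 1) 1]
      obtain ⟨n1, hn1r, _, _, hf1⟩ := hwin 1 le_rfl (by exact_mod_cast hm)
      obtain ⟨nm, hnmr, _, _, hfm⟩ := hwin x0 h1 h2
      rw [hf1, hfm]
      have hb1 : (nm : ℤ) + 1 ≤ (r : ℤ) := by exact_mod_cast hnmr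
      have hb2 : (0 : ℤ) ≤ (n1 : ℤ) := Int.ofNat_nonneg n1
      have hexp : (k + 1) * (r : ℤ) = k * r + r := by ring
      linarith
  have hmono : ∀ x y : ℤ, x ≤ y → fw x ≤ fw y := by
    intro x y hxy
    exact Int.le_induction (motive := fun y _ => fw x ≤ fw y) (le_refl (fw x)) (fun n _ ih => ih.trans (hstep n)) y hxy
  intro i j hij
  constructor
  · intro h
    have hle := hmono (σ j) (σ i) h.le
    rcases lt_or_eq_of_le hle with h' | h'
    · exact h'
    · exact absurd (hmin j i h' h) (by omega)
  · intro h
    by_contra hcon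
    push_neg at hcon
    exact absurd (hmono _ _ hcon) (not_le.mpr h)
end

section
/- Let w = (w_1,...,w_r) be a composition of m. The map σ ↦ f_w ∘ σ is a bijection from the set of minimal-length right coset representatives of S_w in the affine symmetric group of period m (i.e., affine permutations σ for which σ^{-1} is strictly increasing on f_w^{-1}(y) for every y ∈ Z) onto the set of (m,r)-affine compositions of weight w. -/
/-- An affine permutation of period `m`: a bijection `σ : ℤ → ℤ` with
`σ(x+m) = σ(x)+m` and `σ(1)+⋯+σ(m) = m(m+1)/2`. -/
def IsAffinePerm (m : ℕ) (σ : ℤ → ℤ) : Prop :=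
  Function.Bijective σ ∧ (∀ x : ℤ, σ (x + m) = σ x + m) ∧
    2 * (∑ x ∈ Finset.Icc (1 : ℤ) m, σ x) = m * (m + 1)

/-- An `(m,r)`-affine composition: `f : ℤ → ℤ` with `f(x+m) = f(x)+r`, whose
preimage of `[1,r]` has exactly `m` elements, pairwise distinct modulo `m`,
summing to `m(m+1)/2`. -/
def IsAffineComp (m r : ℕ) (f : ℤ → ℤ) : Prop :=
  (∀ x : ℤ, f (x + m) = f x + r) ∧
  ∃ s : Finset ℤ,
    (∀ x : ℤ, x ∈ s ↔ 1 ≤ f x ∧ f x ≤ r) ∧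
    s.card = m ∧
    (∀ x ∈ s, ∀ y ∈ s, x % m = y % m → x = y) ∧
    2 * (∑ x ∈ s, x) = m * (m + 1)


/-- iterate a shift relation -/
lemma shift_iterate (g : ℤ → ℤ) (c d : ℤ) (h : ∀ x, g (x + c) = g x + d) :
    ∀ (k x : ℤ), g (x + c * k) = g x + d * k := by
  intro k
  induction k using Int.induction_on with
  | zero => simp
  | succ n ih =>
    intro x
    have h1 := h (x + c * n)
    have h2 := ih x
    have : x + c * (n + 1) = x + c * n + c := by ring
    rw [this, h1, h2]; ring
  | pred n ih =>
    intro x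
    have h2 := ih (x - c)
    have h1 := h (x - c)
    have e1 : x + c * (-↑n - 1) = (x - c) + c * (-↑n) := by ring
    have e2 : x - c + c = x := by ring
    rw [e1, h2]
    rw [e2] at h1
    linarith

/-- two-sided: congruent arguments give equal values for a periodic function -/
lemma periodic_emod (m : ℕ) (hm : 0 < m) (g : ℤ → ℤ) (hg : ∀ x, g (x + m) = g x)
    (x : ℤ) : g (x % m) = g x := by
  have := shift_iterate g m 0 (by simpa using hg) (x / m) (x % m)
  have e : x % m + (m : ℤ) * (x / m) = x := Int.emod_add_mul_ediv x m
  rw [e] at this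
  simpa using this.symm

/-- sum of a periodic function over a complete residue system -/
lemma sum_crs (m : ℕ) (hm : 0 < m) (g : ℤ → ℤ) (hg : ∀ x, g (x + m) = g x)
    (s : Finset ℤ) (hcard : s.card = m)
    (hdist : ∀ x ∈ s, ∀ y ∈ s, x % m = y % m → x = y) :
    ∑ x ∈ s, g x = ∑ y ∈ Finset.Ico (0:ℤ) m, g y := by
  have himg : s.image (· % (m:ℤ)) = Finset.Ico (0:ℤ) m := by
    apply Finset.eq_of_subset_of_card_le
    · intro y hy
      simp only [Finset.mem_image] at hy
      obtain ⟨x, hx, rfl⟩ := hy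
      have hmpos : (0:ℤ) < m := by exact_mod_cast hm
      simp [Finset.mem_Ico, Int.emod_nonneg x (by positivity), Int.emod_lt_of_pos x hmpos]
    · rw [Finset.card_image_of_injOn (fun x hx y hy h => hdist x hx y hy h), hcard]
      simp [Int.card_Ico]
  calc ∑ x ∈ s, g x = ∑ x ∈ s, g (x % m) := by
        refine Finset.sum_congr rfl fun x hx => (periodic_emod m hm g hg x).symm
    _ = ∑ y ∈ s.image (· % (m:ℤ)), g y := by
        rw [Finset.sum_image (fun x hx y hy h => hdist x hx y hy h)]
    _ = ∑ y ∈ Finset.Ico (0:ℤ) m, g y := by rw [himg]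

/-- Icc 1 m is a complete residue system -/
lemma icc_dist (m : ℕ) (x : ℤ) (hx : x ∈ Finset.Icc (1:ℤ) m) (y : ℤ)
    (hy : y ∈ Finset.Icc (1:ℤ) m) (h : x % m = y % m) : x = y := by
  simp only [Finset.mem_Icc] at hx hy
  have hdvd : (m:ℤ) ∣ x - y := Int.dvd_of_emod_eq_zero (by
    rw [Int.sub_emod, h, sub_self, Int.zero_emod])
  have : x - y = 0 := Int.eq_zero_of_abs_lt_dvd hdvd (by
    rw [abs_lt]; constructor <;> linarith)
  linarith

lemma icc_card (m : ℕ) : (Finset.Icc (1:ℤ) m).card = m := by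
  simp [Int.card_Icc]

lemma gauss (m : ℕ) : 2 * (∑ x ∈ Finset.Icc (1:ℤ) m, x) = m * (m + 1) := by
  induction m with
  | zero => simp
  | succ n ih =>
    have : Finset.Icc (1:ℤ) (n+1) = insert ((n:ℤ)+1) (Finset.Icc (1:ℤ) n) := by
      ext x; simp only [Finset.mem_Icc, Finset.mem_insert]; omega
    push_cast
    rw [this, Finset.sum_insert (by simp)]
    push_cast at ih
    ring_nf
    ring_nf at ih
    linarith

/-- uniqueness of strictly monotone map between finsets of equal card -/
lemma strictMonoOn_unique (P F : Finset ℤ) (hc : P.card = F.card)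
    (f g : ℤ → ℤ)
    (hf : ∀ x ∈ P, ∀ y ∈ P, x < y → f x < f y) (hfm : ∀ x ∈ P, f x ∈ F)
    (hg : ∀ x ∈ P, ∀ y ∈ P, x < y → g x < g y) (hgm : ∀ x ∈ P, g x ∈ F) :
    ∀ x ∈ P, f x = g x := by
  set k := P.card with hk
  have hF : F.card = k := hc.symm
  have hP : P.card = k := rfl
  set e := P.orderEmbOfFin hP with he
  have hmem : ∀ i : Fin k, e i ∈ P := fun i => P.orderEmbOfFin_mem hP i
  have hfe : (fun i => f (e i)) = ⇑(F.orderEmbOfFin hF) :=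
    Finset.orderEmbOfFin_unique hF (fun i => hfm _ (hmem i))
      (fun i j hij => hf _ (hmem i) _ (hmem j) (e.strictMono hij))
  have hge : (fun i => g (e i)) = ⇑(F.orderEmbOfFin hF) :=
    Finset.orderEmbOfFin_unique hF (fun i => hgm _ (hmem i))
      (fun i j hij => hg _ (hmem i) _ (hmem j) (e.strictMono hij))
  intro x hx
  have : x ∈ Set.range ⇑e := by rw [Finset.range_orderEmbOfFin]; exact hx
  obtain ⟨i, rfl⟩ := this
  rw [show f (e i) = _ from congrFun hfe i, show g (e i) = _ from congrFun hge i]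

/-! ### Partial sums and structure of `fw` -/

def pp (r : ℕ) (w : Fin r → ℕ) (n : ℕ) : ℤ :=
  ∑ j ∈ Finset.univ.filter (fun j : Fin r => j.val < n), (w j : ℤ)

lemma pp_zero (r : ℕ) (w : Fin r → ℕ) : pp r w 0 = 0 := by simp [pp]

lemma pp_nonneg (r : ℕ) (w : Fin r → ℕ) (n : ℕ) : 0 ≤ pp r w n :=
  Finset.sum_nonneg fun j _ => by positivity

lemma pp_succ (r : ℕ) (w : Fin r → ℕ) (n : ℕ) (h : n < r) :
    pp r w (n + 1) = pp r w n + w ⟨n, h⟩ := by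
  unfold pp
  have : Finset.univ.filter (fun j : Fin r => j.val < n + 1)
      = insert ⟨n, h⟩ (Finset.univ.filter (fun j : Fin r => j.val < n)) := by
    ext j
    simp only [Finset.mem_filter, Finset.mem_insert, Finset.mem_univ, true_and, Fin.ext_iff]
    omega
  rw [this, Finset.sum_insert (by simp)]
  ring

lemma pp_mono (r : ℕ) (w : Fin r → ℕ) : Monotone (pp r w) := by
  intro a b hab
  apply Finset.sum_le_sum_of_subset_of_nonneg
  · intro j hj
    simp only [Finset.mem_filter, Finset.mem_univ, true_and] at *
    omega
  · intro j _ _; positivity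

lemma pp_top (r : ℕ) (w : Fin r → ℕ) (n : ℕ) (h : r ≤ n) :
    pp r w n = ∑ j, (w j : ℤ) := by
  unfold pp
  congr 1
  apply Finset.filter_true_of_mem
  intro j _
  omega

section FW

variable (m r : ℕ) (hm : 0 < m) (hr : 0 < r) (w : Fin r → ℕ) (hw : (∑ i, w i) = m)
  (fw : ℤ → ℤ)
  (hfw_per : ∀ x : ℤ, fw (x + m) = fw x + r)
  (hfw_val : ∀ i : Fin r, ∀ x : ℤ,
      (∑ j ∈ Finset.univ.filter (fun j : Fin r => j.val < i.val), (w j : ℤ)) < x →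
      x ≤ (∑ j ∈ Finset.univ.filter (fun j : Fin r => j.val ≤ i.val), (w j : ℤ)) →
      fw x = i.val + 1)

include hw in
lemma pp_r : pp r w r = m := by
  rw [pp_top r w r le_rfl]
  exact_mod_cast congrArg (fun n : ℕ => (n : ℤ)) hw

include hw in
lemma pp_le (n : ℕ) : pp r w n ≤ m := by
  rcases le_or_gt n r with h | h
  · exact (pp_mono r w h).trans (le_of_eq (pp_r m r w hw))
  · rw [pp_top r w n h.le, ← pp_top r w r le_rfl, pp_r m r w hw]

include hfw_val in
lemma fw_Ioc (i : Fin r) (x : ℤ) (h1 : pp r w i.val < x) (h2 : x ≤ pp r w (i.val + 1)) :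
    fw x = i.val + 1 := by
  have hset : Finset.univ.filter (fun j : Fin r => j.val ≤ i.val)
      = Finset.univ.filter (fun j : Fin r => j.val < i.val + 1) := by
    ext j
    simp only [Finset.mem_filter, Finset.mem_univ, true_and]
    omega
  apply hfw_val i x h1
  rw [hset]
  exact h2

include hm hr hw in
lemma exists_index (x : ℤ) (h1 : 1 ≤ x) (h2 : x ≤ m) :
    ∃ i : Fin r, pp r w i.val < x ∧ x ≤ pp r w (i.val + 1) := by
  classical
  set P : ℕ → Prop := fun n => pp r w n < x with hP
  have hP0 : P 0 := by rw [hP]; simp only [pp_zero]; omega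
  set n := Nat.findGreatest P r with hn
  have hPn : P n := Nat.findGreatest_spec (Nat.zero_le r) hP0
  have hnr : n ≤ r := Nat.findGreatest_le r
  have hnePr : ¬ P r := by rw [hP]; simp only [pp_r m r w hw]; omega
  have hnlt : n < r := by
    rcases lt_or_eq_of_le hnr with h | h
    · exact h
    · exact absurd (h ▸ hPn) hnePr
  have hnot : ¬ P (n + 1) := Nat.findGreatest_is_greatest (Nat.lt_succ_self n) hnlt
  exact ⟨⟨n, hnlt⟩, hPn, by simpa [hP] using hnot⟩

include hm hr hw hfw_val in
lemma fw_bounds (x : ℤ) (h1 : 1 ≤ x) (h2 : x ≤ m) : 1 ≤ fw x ∧ fw x ≤ r := by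
  obtain ⟨i, hi1, hi2⟩ := exists_index m r hm hr w hw x h1 h2
  rw [fw_Ioc r w fw hfw_val i x hi1 hi2]
  have hi := i.isLt
  constructor
  · omega
  · exact_mod_cast Nat.succ_le_of_lt hi

include hm hr hw hfw_per hfw_val in
lemma fw_range (x : ℤ) : (1 ≤ fw x ∧ fw x ≤ r) ↔ (1 ≤ x ∧ x ≤ m) := by
  have hsh := shift_iterate fw m r hfw_per
  have hmpos : (0:ℤ) < m := by exact_mod_cast hm
  have he1 := Int.emod_nonneg (x - 1) (ne_of_gt hmpos)
  have he2 := Int.emod_lt_of_pos (x - 1) hmpos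
  have he3 := Int.emod_add_mul_ediv (x - 1) (m : ℤ)
  set x₀ : ℤ := (x - 1) % m + 1 with hx₀def
  set k : ℤ := (x - 1) / m with hkdef
  have hx₀1 : 1 ≤ x₀ := by omega
  have hx₀2 : x₀ ≤ m := by omega
  have hxeq : x = x₀ + m * k := by omega
  have hfx : fw x = fw x₀ + r * k := by rw [hxeq]; exact hsh k x₀
  have hb := fw_bounds m r hm hr w hw fw hfw_val x₀ hx₀1 hx₀2
  constructor
  · rintro ⟨ha, hb'⟩
    have hdvd : (r:ℤ) ∣ r * k := ⟨k, rfl⟩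
    have hk0 : (r:ℤ) * k = 0 := by
      apply Int.eq_zero_of_abs_lt_dvd hdvd
      rw [abs_lt]
      omega
    have : k = 0 := by
      have hrpos : (0:ℤ) < r := by exact_mod_cast hr
      exact (mul_eq_zero.mp hk0).resolve_left (by omega)
    rw [hxeq, this]; constructor <;> omega
  · rintro ⟨ha, hb'⟩
    have : x = x₀ := by
      have h1 : (x - 1) % m = x - 1 := Int.emod_eq_of_lt (by omega) (by omega)
      omega
    rw [this] at *
    exact fw_bounds m r hm hr w hw fw hfw_val x₀ hx₀1 hx₀2

include hm hr hw hfw_per hfw_val in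
lemma fw_fiber (i : Fin r) (x : ℤ) :
    fw x = i.val + 1 ↔ (pp r w i.val < x ∧ x ≤ pp r w (i.val + 1)) := by
  constructor
  · intro h
    have hi := i.isLt
    have hx : 1 ≤ x ∧ x ≤ m := by
      rw [← fw_range m r hm hr w hw fw hfw_per hfw_val x]
      omega
    obtain ⟨i', hi'1, hi'2⟩ := exists_index m r hm hr w hw x hx.1 hx.2
    have := fw_Ioc r w fw hfw_val i' x hi'1 hi'2
    have : i'.val = i.val := by omega
    rw [← this]; exact ⟨hi'1, hi'2⟩
  · rintro ⟨h1, h2⟩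
    exact fw_Ioc r w fw hfw_val i x h1 h2

end FW

/-! ### Additional helpers -/

lemma crs_img (m : ℕ) (hm : 0 < m) (s : Finset ℤ) (hcard : s.card = m)
    (hdist : ∀ x ∈ s, ∀ y ∈ s, x % m = y % m → x = y) :
    s.image (· % (m:ℤ)) = Finset.Ico (0:ℤ) m := by
  apply Finset.eq_of_subset_of_card_le
  · intro y hy
    simp only [Finset.mem_image] at hy
    obtain ⟨x, hx, rfl⟩ := hy
    have hmpos : (0:ℤ) < m := by exact_mod_cast hm
    simp [Finset.mem_Ico, Int.emod_nonneg x (by positivity), Int.emod_lt_of_pos x hmpos]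
  · rw [Finset.card_image_of_injOn (fun x hx y hy h => hdist x hx y hy h), hcard]
    simp [Int.card_Ico]

lemma crs_exists_unique (m : ℕ) (hm : 0 < m) (s : Finset ℤ) (hcard : s.card = m)
    (hdist : ∀ x ∈ s, ∀ y ∈ s, x % m = y % m → x = y) (x : ℤ) :
    ∃! t, t ∈ s ∧ t % m = x % m := by
  have hmpos : (0:ℤ) < m := by exact_mod_cast hm
  have hx : x % m ∈ s.image (· % (m:ℤ)) := by
    rw [crs_img m hm s hcard hdist]
    simp [Finset.mem_Ico, Int.emod_nonneg x (by positivity), Int.emod_lt_of_pos x hmpos]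
  simp only [Finset.mem_image] at hx
  obtain ⟨t, ht, htx⟩ := hx
  exact ⟨t, ⟨ht, htx⟩, fun t' ⟨ht', htx'⟩ => hdist t' ht' t ht (by rw [htx, htx'])⟩

section Main

variable (m r : ℕ) (hm : 0 < m) (hr : 0 < r) (w : Fin r → ℕ) (hw : (∑ i, w i) = m)
  (fw : ℤ → ℤ)
  (hfw_per : ∀ x : ℤ, fw (x + m) = fw x + r)
  (hfw_val : ∀ i : Fin r, ∀ x : ℤ,
      (∑ j ∈ Finset.univ.filter (fun j : Fin r => j.val < i.val), (w j : ℤ)) < x →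
      x ≤ (∑ j ∈ Finset.univ.filter (fun j : Fin r => j.val ≤ i.val), (w j : ℤ)) →
      fw x = i.val + 1)

-- every fiber of `fw` is an integer interval `Ioc a b`
include hm hr hw hfw_per hfw_val in
lemma fw_fiber_gen (y : ℤ) : ∃ a b : ℤ, ∀ z : ℤ, fw z = y ↔ z ∈ Finset.Ioc a b := by
  have hrpos : (0:ℤ) < r := by exact_mod_cast hr
  have he1 := Int.emod_nonneg (y - 1) (ne_of_gt hrpos)
  have he2 := Int.emod_lt_of_pos (y - 1) hrpos
  have he3 := Int.emod_add_mul_ediv (y - 1) (r : ℤ)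
  set y₀ : ℤ := (y - 1) % r + 1 with hy₀
  set k : ℤ := (y - 1) / r with hk
  have hyeq : y = y₀ + r * k := by omega
  have hi : ((y₀ - 1).toNat : ℤ) = y₀ - 1 := Int.toNat_of_nonneg (by omega)
  have hilt : (y₀ - 1).toNat < r := by omega
  set i : Fin r := ⟨(y₀ - 1).toNat, hilt⟩ with hidef
  have hival : (i.val : ℤ) + 1 = y₀ := by rw [hidef]; simp only; omega
  refine ⟨pp r w i.val + m * k, pp r w (i.val + 1) + m * k, fun z => ?_⟩
  have hsh := shift_iterate fw m r hfw_per k (z - m * k)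
  have hze : z - m * k + m * k = z := by ring
  rw [hze] at hsh
  rw [Finset.mem_Ioc]
  constructor
  · intro hz
    have : fw (z - m * k) = i.val + 1 := by omega
    have := (fw_fiber m r hm hr w hw fw hfw_per hfw_val i (z - m * k)).mp this
    omega
  · intro hz
    have : fw (z - m * k) = i.val + 1 :=
      (fw_fiber m r hm hr w hw fw hfw_per hfw_val i (z - m * k)).mpr ⟨by omega, by omega⟩
    omega

include hm hr hw hfw_per hfw_val in
lemma mapsTo_part (σ : ℤ → ℤ) (hσ : IsAffinePerm m σ) :
    IsAffineComp m r (fw ∘ σ) ∧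
      ∀ i : Fin r, Set.ncard {x : ℤ | (fw ∘ σ) x = i.val + 1} = w i := by
  obtain ⟨hbij, hper, hsum⟩ := hσ
  set e := Equiv.ofBijective σ hbij with he
  set σi : ℤ → ℤ := ⇑e.symm with hσidef
  have hright : ∀ a, σ (σi a) = a := fun a => e.apply_symm_apply a
  have hleft : ∀ x, σi (σ x) = x := fun x => e.symm_apply_apply x
  have hσsh := shift_iterate σ m m hper
  set s : Finset ℤ := (Finset.Icc (1:ℤ) m).image σi with hs
  have hmem : ∀ x : ℤ, x ∈ s ↔ 1 ≤ fw (σ x) ∧ fw (σ x) ≤ r := by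
    intro x
    rw [fw_range m r hm hr w hw fw hfw_per hfw_val (σ x)]
    constructor
    · intro hx
      simp only [hs, Finset.mem_image, Finset.mem_Icc] at hx
      obtain ⟨a, ha, rfl⟩ := hx
      rw [hright]; exact ha
    · intro hx
      simp only [hs, Finset.mem_image, Finset.mem_Icc]
      exact ⟨σ x, hx, hleft x⟩
  have hcard : s.card = m := by
    rw [hs, Finset.card_image_of_injective _ e.symm.injective, icc_card]
  have hdist : ∀ x ∈ s, ∀ y ∈ s, x % m = y % m → x = y := by
    intro x hx y hy hxy
    have hdvd : (m:ℤ) ∣ x - y := Int.dvd_of_emod_eq_zero (by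
      rw [Int.sub_emod, hxy, sub_self, Int.zero_emod])
    obtain ⟨k, hk⟩ := hdvd
    have hxk : x = y + m * k := by linarith
    have hσxy : σ x = σ y + m * k := by rw [hxk]; exact hσsh k y
    have hx1 := ((fw_range m r hm hr w hw fw hfw_per hfw_val (σ x)).mp ((hmem x).mp hx))
    have hy1 := ((fw_range m r hm hr w hw fw hfw_per hfw_val (σ y)).mp ((hmem y).mp hy))
    have hk0 : (m:ℤ) * k = 0 := by
      apply Int.eq_zero_of_abs_lt_dvd ⟨k, rfl⟩
      rw [abs_lt]; omega
    omega
  have hg : ∀ x : ℤ, (σ (x + m) - (x + m)) = σ x - x := by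
    intro x; rw [hper]; ring
  have h1 := sum_crs m hm (fun x => σ x - x) hg s hcard hdist
  have h2 := sum_crs m hm (fun x => σ x - x) hg (Finset.Icc 1 m) (icc_card m) (icc_dist m)
  have h3 : ∑ x ∈ s, σ x = ∑ a ∈ Finset.Icc (1:ℤ) m, a := by
    rw [hs, Finset.sum_image (fun x _ y _ h => e.symm.injective h)]
    exact Finset.sum_congr rfl fun a _ => hright a
  have hgauss := gauss m
  have hs1 : ∑ x ∈ s, (σ x - x) = ∑ x ∈ s, σ x - ∑ x ∈ s, x := Finset.sum_sub_distrib _ _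
  have hs2 : ∑ x ∈ Finset.Icc (1:ℤ) m, (σ x - x)
      = ∑ x ∈ Finset.Icc (1:ℤ) m, σ x - ∑ x ∈ Finset.Icc (1:ℤ) m, x := Finset.sum_sub_distrib _ _
  refine ⟨⟨fun x => by simp only [Function.comp_apply, hper, hfw_per], s,
    fun x => hmem x, hcard, hdist, by rw [← h2] at h1; linarith⟩, ?_⟩
  intro i
  have hfib : {x : ℤ | (fw ∘ σ) x = i.val + 1}
      = σi '' (Set.Ioc (pp r w i.val) (pp r w (i.val + 1))) := by
    ext x
    simp only [Set.mem_setOf_eq, Set.mem_image, Set.mem_Ioc, Function.comp_apply]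
    rw [fw_fiber m r hm hr w hw fw hfw_per hfw_val i (σ x)]
    constructor
    · intro hx; exact ⟨σ x, hx, hleft x⟩
    · rintro ⟨a, ha, rfl⟩; rw [hright]; exact ha
  rw [hfib, Set.ncard_image_of_injective _ e.symm.injective, ← Finset.coe_Ioc,
    Set.ncard_coe_finset, Int.card_Ioc, pp_succ r w i.val i.isLt]
  simp

include hm hr hw hfw_per hfw_val in
lemma inj_part (σ τ : ℤ → ℤ)
    (hσ : IsAffinePerm m σ) (hσmin : ∀ s t : ℤ, fw (σ s) = fw (σ t) → σ s < σ t → s < t)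
    (hτ : IsAffinePerm m τ) (hτmin : ∀ s t : ℤ, fw (τ s) = fw (τ t) → τ s < τ t → s < t)
    (heq : fw ∘ σ = fw ∘ τ) : σ = τ := by
  obtain ⟨hσbij, _, _⟩ := hσ
  obtain ⟨hτbij, _, _⟩ := hτ
  have heq' : ∀ z, fw (σ z) = fw (τ z) := fun z => congrFun heq z
  funext x
  obtain ⟨a, b, hab⟩ := fw_fiber_gen m r hm hr w hw fw hfw_per hfw_val (fw (σ x))
  set F : Finset ℤ := Finset.Ioc a b with hF
  set e := Equiv.ofBijective σ hσbij with he
  set P : Finset ℤ := F.image ⇑e.symm with hP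
  have hPmem : ∀ z : ℤ, z ∈ P ↔ fw (σ z) = fw (σ x) := by
    intro z
    rw [hab (σ z)]
    simp only [hP, Finset.mem_image]
    constructor
    · rintro ⟨c, hc, rfl⟩
      rw [show σ (e.symm c) = c from e.apply_symm_apply c]; exact hc
    · intro hz; exact ⟨σ z, hz, e.symm_apply_apply z⟩
  have hPcard : P.card = F.card := Finset.card_image_of_injective _ e.symm.injective
  have hx : x ∈ P := (hPmem x).mpr rfl
  have hσmemF : ∀ z ∈ P, σ z ∈ F := fun z hz => (hab (σ z)).mp ((hPmem z).mp hz)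
  have hτmemF : ∀ z ∈ P, τ z ∈ F := fun z hz =>
    (hab (τ z)).mp (by rw [← heq' z]; exact (hPmem z).mp hz)
  have hσmono : ∀ z ∈ P, ∀ z' ∈ P, z < z' → σ z < σ z' := by
    intro z hz z' hz' hlt
    have hfz : fw (σ z) = fw (σ z') := by
      rw [(hPmem z).mp hz, (hPmem z').mp hz']
    rcases lt_trichotomy (σ z) (σ z') with h | h | h
    · exact h
    · exact absurd (hσbij.1 h) (ne_of_lt hlt)
    · exact absurd (hσmin z' z hfz.symm h) (by omega)
  have hτmono : ∀ z ∈ P, ∀ z' ∈ P, z < z' → τ z < τ z' := by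
    intro z hz z' hz' hlt
    have hfz : fw (τ z) = fw (τ z') := by
      rw [← heq' z, ← heq' z', (hPmem z).mp hz, (hPmem z').mp hz']
    rcases lt_trichotomy (τ z) (τ z') with h | h | h
    · exact h
    · exact absurd (hτbij.1 h) (ne_of_lt hlt)
    · exact absurd (hτmin z' z hfz.symm h) (by omega)
  exact strictMonoOn_unique P F hPcard σ τ hσmono hσmemF hτmono hτmemF x hx

include hm hr hw hfw_per hfw_val in
lemma surj_part (f : ℤ → ℤ) (hf : IsAffineComp m r f)
    (hwt : ∀ i : Fin r, Set.ncard {x : ℤ | f x = i.val + 1} = w i) :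
    ∃ σ : ℤ → ℤ,
      (IsAffinePerm m σ ∧ ∀ s t : ℤ, fw (σ s) = fw (σ t) → σ s < σ t → s < t) ∧
        fw ∘ σ = f := by
  classical
  obtain ⟨hfper, s, hsmem, hscard, hsdist, hssum⟩ := hf
  have hfsh := shift_iterate f m r hfper
  have hfwsh := shift_iterate fw m r hfw_per
  have hmpos : (0:ℤ) < m := by exact_mod_cast hm
  have hrpos : (0:ℤ) < r := by exact_mod_cast hr
  -- fibers of f
  set Pf : Fin r → Finset ℤ := fun i => s.filter (fun x => f x = i.val + 1) with hPfdef
  have hPfmem : ∀ (i : Fin r) (x : ℤ), x ∈ Pf i ↔ f x = i.val + 1 := by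
    intro i x
    simp only [hPfdef, Finset.mem_filter]
    constructor
    · rintro ⟨_, h⟩; exact h
    · intro h
      have hi := i.isLt
      exact ⟨(hsmem x).mpr ⟨by omega, by omega⟩, h⟩
  have hPfcard : ∀ i : Fin r, (Pf i).card = w i := by
    intro i
    have hcoe : ((Pf i : Finset ℤ) : Set ℤ) = {x : ℤ | f x = i.val + 1} := by
      ext x; simp only [Finset.coe_sort_coe, Finset.mem_coe, Set.mem_setOf_eq, hPfmem]
    rw [← hwt i, ← hcoe, Set.ncard_coe_finset]
  -- fibers of fw
  set Ff : Fin r → Finset ℤ := fun i => Finset.Ioc (pp r w i.val) (pp r w (i.val + 1))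
    with hFfdef
  have hFfmem : ∀ (i : Fin r) (z : ℤ), z ∈ Ff i ↔ fw z = i.val + 1 := by
    intro i z
    rw [hFfdef]; simp only [Finset.mem_Ioc]
    exact (fw_fiber m r hm hr w hw fw hfw_per hfw_val i z).symm
  have hFfcard : ∀ i : Fin r, (Ff i).card = w i := by
    intro i
    rw [hFfdef]
    simp only [Int.card_Ioc, pp_succ r w i.val i.isLt]
    simp
  have hFfsub : ∀ i : Fin r, ∀ z ∈ Ff i, 1 ≤ z ∧ z ≤ m := by
    intro i z hz
    rw [hFfdef] at hz
    simp only [Finset.mem_Ioc] at hz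
    have h1 := pp_nonneg r w i.val
    have h2 := pp_le m r w hw (i.val + 1)
    omega
  -- the order isomorphism on each fiber
  set g : (i : Fin r) → {x // x ∈ Pf i} → ℤ := fun i t =>
    (Ff i).orderEmbOfFin (hFfcard i) (((Pf i).orderIsoOfFin (hPfcard i)).symm t) with hgdef
  set σ₀ : ℤ → ℤ := fun t =>
    if h : ∃ i : Fin r, t ∈ Pf i then g h.choose ⟨t, h.choose_spec⟩ else t with hσ₀def
  have hiu : ∀ (t : ℤ) (i i' : Fin r), t ∈ Pf i → t ∈ Pf i' → i = i' := by
    intro t i i' h1 h2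
    have e1 := (hPfmem i t).mp h1
    have e2 := (hPfmem i' t).mp h2
    have : i.val = i'.val := by omega
    exact Fin.ext this
  have hσ₀eq : ∀ (i : Fin r) (t : ℤ) (ht : t ∈ Pf i), σ₀ t = g i ⟨t, ht⟩ := by
    intro i t ht
    have hex : ∃ i' : Fin r, t ∈ Pf i' := ⟨i, ht⟩
    rw [hσ₀def]
    simp only [dif_pos hex]
    have hc : hex.choose = i := hiu t _ _ hex.choose_spec ht
    subst hc
    rfl
  have hσ₀mem : ∀ (i : Fin r) (t : ℤ), t ∈ Pf i → σ₀ t ∈ Ff i := by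
    intro i t ht
    rw [hσ₀eq i t ht, hgdef]
    exact (Ff i).orderEmbOfFin_mem (hFfcard i) _
  have hσ₀mono : ∀ (i : Fin r) (t : ℤ), t ∈ Pf i → ∀ t' : ℤ, t' ∈ Pf i → t < t' →
      σ₀ t < σ₀ t' := by
    intro i t ht t' ht' hlt
    rw [hσ₀eq i t ht, hσ₀eq i t' ht', hgdef]
    apply ((Ff i).orderEmbOfFin (hFfcard i)).strictMono
    apply (((Pf i).orderIsoOfFin (hPfcard i)).symm).strictMono
    exact Subtype.mk_lt_mk.mpr hlt
  have hσ₀surj : ∀ (i : Fin r) (z : ℤ), z ∈ Ff i → ∃ t : ℤ, ∃ ht : t ∈ Pf i, σ₀ t = z := by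
    intro i z hz
    have : z ∈ Set.range ⇑((Ff i).orderEmbOfFin (hFfcard i)) := by
      rw [Finset.range_orderEmbOfFin]; exact hz
    obtain ⟨j, hj⟩ := this
    set t : {x // x ∈ Pf i} := (Pf i).orderIsoOfFin (hPfcard i) j with htdef
    refine ⟨(t : ℤ), t.2, ?_⟩
    rw [hσ₀eq i (t : ℤ) t.2, hgdef]
    have hco : (⟨(t : ℤ), t.2⟩ : {x // x ∈ Pf i}) = t := rfl
    simp only [hco, htdef, Subtype.coe_eta, OrderIso.symm_apply_apply]
    exact hj
  -- fw on σ₀ of fiber elements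
  have hmem_s_ex : ∀ t ∈ s, ∃ i : Fin r, t ∈ Pf i := by
    intro t ht
    have hb := (hsmem t).mp ht
    have h1 : ((f t - 1).toNat : ℤ) = f t - 1 := Int.toNat_of_nonneg (by omega)
    have h2 : (f t - 1).toNat < r := by omega
    exact ⟨⟨(f t - 1).toNat, h2⟩, (hPfmem _ t).mpr (by simp only; omega)⟩
  have hfwσ₀ : ∀ t ∈ s, fw (σ₀ t) = f t := by
    intro t ht
    obtain ⟨i, hi⟩ := hmem_s_ex t ht
    rw [(hFfmem i (σ₀ t)).mp (hσ₀mem i t hi), (hPfmem i t).mp hi]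
  have hσ₀icc : ∀ t ∈ s, 1 ≤ σ₀ t ∧ σ₀ t ≤ m := by
    intro t ht
    obtain ⟨i, hi⟩ := hmem_s_ex t ht
    exact hFfsub i _ (hσ₀mem i t hi)
  have hσ₀injs : ∀ t ∈ s, ∀ t' ∈ s, σ₀ t = σ₀ t' → t = t' := by
    intro t ht t' ht' hE
    have hft : f t = f t' := by rw [← hfwσ₀ t ht, ← hfwσ₀ t' ht', hE]
    obtain ⟨i, hi⟩ := hmem_s_ex t ht
    have hi' : t' ∈ Pf i := (hPfmem i t').mpr (by rw [← hft]; exact (hPfmem i t).mp hi)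
    rcases lt_trichotomy t t' with h | h | h
    · exact absurd (hσ₀mono i t hi t' hi' h) (by omega)
    · exact h
    · exact absurd (hσ₀mono i t' hi' t hi h) (by omega)
  -- representative function
  set rep : ℤ → ℤ := fun x => Finset.choose (fun t => t % m = x % m) s
    (crs_exists_unique m hm s hscard hsdist x) with hrepdef
  have hrep_mem : ∀ x : ℤ, rep x ∈ s := fun x =>
    (Finset.choose_spec (fun t => t % m = x % m) s _).1
  have hrep_mod : ∀ x : ℤ, rep x % m = x % m := fun x =>
    (Finset.choose_spec (fun t => t % m = x % m) s _).2
  have hrep_eq : ∀ x t : ℤ, t ∈ s → t % m = x % m → rep x = t := by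
    intro x t ht hmod
    exact ((crs_exists_unique m hm s hscard hsdist x).unique
      ⟨hrep_mem x, hrep_mod x⟩ ⟨ht, hmod⟩)
  have hrep_self : ∀ t ∈ s, rep t = t := fun t ht => hrep_eq t t ht rfl
  have hrep_dvd : ∀ x : ℤ, (m:ℤ) ∣ x - rep x := by
    intro x
    apply Int.dvd_of_emod_eq_zero
    rw [Int.sub_emod, hrep_mod, sub_self, Int.zero_emod]
  -- the permutation
  set σ : ℤ → ℤ := fun x => σ₀ (rep x) + (x - rep x) with hσdef
  have hσs : ∀ t ∈ s, σ t = σ₀ t := by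
    intro t ht; rw [hσdef]; simp only [hrep_self t ht]; ring
  have hcomp : ∀ x : ℤ, fw (σ x) = f x := by
    intro x
    obtain ⟨k, hk⟩ := hrep_dvd x
    have h1 : σ x = σ₀ (rep x) + m * k := by rw [hσdef]; simp only; omega
    have h2 : fw (σ₀ (rep x) + m * k) = fw (σ₀ (rep x)) + r * k := hfwsh k _
    have h3 : f (rep x + m * k) = f (rep x) + r * k := hfsh k _
    have h4 : rep x + m * k = x := by omega
    rw [h1, h2, hfwσ₀ (rep x) (hrep_mem x), ← h3, h4]
  have hrep_per : ∀ x : ℤ, rep (x + m) = rep x := by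
    intro x
    apply hrep_eq
    · exact hrep_mem x
    · rw [hrep_mod x]
      conv_rhs => rw [show x + (m:ℤ) = x + m * 1 by ring, Int.add_mul_emod_self_left]
  have hσper : ∀ x : ℤ, σ (x + m) = σ x + m := by
    intro x; rw [hσdef]; simp only [hrep_per x]; ring
  -- injectivity
  have hinj : Function.Injective σ := by
    intro x x' hE
    obtain ⟨k, hk⟩ := hrep_dvd x
    obtain ⟨k', hk'⟩ := hrep_dvd x'
    have hE' : σ₀ (rep x) + m * k = σ₀ (rep x') + m * k' := by
      rw [hσdef] at hE; simp only at hE; omega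
    have hicc := hσ₀icc (rep x) (hrep_mem x)
    have hicc' := hσ₀icc (rep x') (hrep_mem x')
    have hdvd2 : (m:ℤ) ∣ σ₀ (rep x) - σ₀ (rep x') := ⟨k' - k, by rw [mul_sub]; omega⟩
    have h0 : σ₀ (rep x) - σ₀ (rep x') = 0 :=
      Int.eq_zero_of_abs_lt_dvd hdvd2 (by rw [abs_lt]; omega)
    have hrr : rep x = rep x' :=
      hσ₀injs (rep x) (hrep_mem x) (rep x') (hrep_mem x') (by omega)
    have hE'' : (m:ℤ) * k = m * k' := by rw [hrr] at hE'; omega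
    have hkk : k = k' := mul_left_cancel₀ hmpos.ne' hE''
    subst hkk
    omega
  -- surjectivity
  have hsurj : Function.Surjective σ := by
    intro z
    have he1 := Int.emod_nonneg (z - 1) (ne_of_gt hmpos)
    have he2 := Int.emod_lt_of_pos (z - 1) hmpos
    have he3 := Int.emod_add_mul_ediv (z - 1) (m : ℤ)
    set z₀ : ℤ := (z - 1) % m + 1 with hz₀
    set kz : ℤ := (z - 1) / m with hkz
    obtain ⟨i, hi1, hi2⟩ := exists_index m r hm hr w hw z₀ (by omega) (by omega)
    have hz₀mem : z₀ ∈ Ff i := by rw [hFfdef]; simp only [Finset.mem_Ioc]; exact ⟨hi1, hi2⟩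
    obtain ⟨t, ht, hσ₀t⟩ := hσ₀surj i z₀ hz₀mem
    have hts : t ∈ s := (hsmem t).mpr (by
      have := (hPfmem i t).mp ht
      have hib := i.isLt
      omega)
    refine ⟨t + m * kz, ?_⟩
    have hmod : t % m = (t + m * kz) % m := (Int.add_mul_emod_self_left t m kz).symm
    have hreptk : rep (t + m * kz) = t := hrep_eq (t + m * kz) t hts hmod
    rw [hσdef]; simp only [hreptk]
    omega
  -- sum condition
  have hg : ∀ x : ℤ, (σ (x + m) - (x + m)) = σ x - x := by
    intro x; rw [hσper]; ring
  have h1 := sum_crs m hm (fun x => σ x - x) hg s hscard hsdist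
  have h2 := sum_crs m hm (fun x => σ x - x) hg (Finset.Icc 1 m) (icc_card m) (icc_dist m)
  have himg : s.image σ₀ = Finset.Icc (1:ℤ) m := by
    apply Finset.eq_of_subset_of_card_le
    · intro z hz
      simp only [Finset.mem_image] at hz
      obtain ⟨t, ht, rfl⟩ := hz
      have := hσ₀icc t ht
      simp only [Finset.mem_Icc]; omega
    · rw [Finset.card_image_of_injOn (fun t ht t' ht' hE => hσ₀injs t ht t' ht' hE),
        hscard, icc_card]
  have hsumσ₀ : ∑ t ∈ s, σ₀ t = ∑ a ∈ Finset.Icc (1:ℤ) m, a := by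
    rw [← himg, Finset.sum_image (fun t ht t' ht' hE => hσ₀injs t ht t' ht' hE)]
  have hsumσs : ∑ t ∈ s, σ t = ∑ t ∈ s, σ₀ t :=
    Finset.sum_congr rfl fun t ht => hσs t ht
  have hgauss := gauss m
  have hs1 : ∑ x ∈ s, (σ x - x) = ∑ x ∈ s, σ x - ∑ x ∈ s, x := Finset.sum_sub_distrib _ _
  have hs2 : ∑ x ∈ Finset.Icc (1:ℤ) m, (σ x - x)
      = ∑ x ∈ Finset.Icc (1:ℤ) m, σ x - ∑ x ∈ Finset.Icc (1:ℤ) m, x := Finset.sum_sub_distrib _ _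
  have hsum : 2 * (∑ x ∈ Finset.Icc (1:ℤ) m, σ x) = m * (m + 1) := by
    rw [← h2] at h1; linarith
  -- minimality condition
  have hmin : ∀ u v : ℤ, fw (σ u) = fw (σ v) → σ u < σ v → u < v := by
    intro u v hfuv hlt
    have hfu : f u = f v := by rw [← hcomp u, ← hcomp v, hfuv]
    obtain ⟨k, hk⟩ := hrep_dvd u
    obtain ⟨k', hk'⟩ := hrep_dvd v
    have hueq : u = rep u + m * k := by omega
    have hveq : v = rep v + m * k' := by omega
    have hfequ : f u = f (rep u) + r * k := by
      have h := hfsh k (rep u); rw [← hueq] at h; exact h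
    have hfeqv : f v = f (rep v) + r * k' := by
      have h := hfsh k' (rep v); rw [← hveq] at h; exact h
    have hbu := (hsmem (rep u)).mp (hrep_mem u)
    have hbv := (hsmem (rep v)).mp (hrep_mem v)
    have hdvd2 : (r:ℤ) ∣ f (rep u) - f (rep v) := ⟨k' - k, by rw [mul_sub]; omega⟩
    have h0 : f (rep u) - f (rep v) = 0 :=
      Int.eq_zero_of_abs_lt_dvd hdvd2 (by rw [abs_lt]; omega)
    have hE'' : (r:ℤ) * k = r * k' := by omega
    have hkk : k = k' := mul_left_cancel₀ hrpos.ne' hE''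
    subst hkk
    have hσu : σ u = σ₀ (rep u) + m * k := by simp only [hσdef]; omega
    have hσv : σ v = σ₀ (rep v) + m * k := by simp only [hσdef]; omega
    have hltσ₀ : σ₀ (rep u) < σ₀ (rep v) := by omega
    -- rep u and rep v are in the same fiber
    obtain ⟨i, hi⟩ := hmem_s_ex (rep u) (hrep_mem u)
    have hi' : rep v ∈ Pf i := (hPfmem i (rep v)).mpr (by
      rw [← (hPfmem i (rep u)).mp hi]; omega)
    have hltrep : rep u < rep v := by
      rcases lt_trichotomy (rep u) (rep v) with h | h | h
      · exact h
      · rw [h] at hltσ₀; omega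
      · exact absurd (hσ₀mono i (rep v) hi' (rep u) hi h) (by omega)
    omega
  exact ⟨σ, ⟨⟨⟨hinj, hsurj⟩, hσper, hsum⟩, hmin⟩, funext fun x => hcomp x⟩

end Main

/-- Let `w` be a composition of `m` with `r` parts and `fw` the nondecreasing
weight-`w` step function.  The map `σ ↦ fw ∘ σ` is a bijection from the set of
minimal-length right coset representatives of `S_w` in the affine symmetric
group of period `m` (affine permutations whose inverse is strictly increasing
on each fiber of `fw`) onto the set of `(m,r)`-affine compositions of weight
`w`. -/
theorem min_coset_reps_biject_affine_comps (m r : ℕ) (hm : 0 < m) (hr : 0 < r)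
    (w : Fin r → ℕ) (hw : (∑ i, w i) = m)
    (fw : ℤ → ℤ)
    (hfw_per : ∀ x : ℤ, fw (x + m) = fw x + r)
    (hfw_val : ∀ i : Fin r, ∀ x : ℤ,
      (∑ j ∈ Finset.univ.filter (fun j : Fin r => j.val < i.val), (w j : ℤ)) < x →
      x ≤ (∑ j ∈ Finset.univ.filter (fun j : Fin r => j.val ≤ i.val), (w j : ℤ)) →
      fw x = i.val + 1) :
    Set.BijOn (fun σ => fw ∘ σ)
      {σ : ℤ → ℤ | IsAffinePerm m σ ∧
        ∀ s t : ℤ, fw (σ s) = fw (σ t) → σ s < σ t → s < t}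
      {f : ℤ → ℤ | IsAffineComp m r f ∧
        ∀ i : Fin r, Set.ncard {x : ℤ | f x = i.val + 1} = w i} := by
  refine ⟨?_, ?_, ?_⟩
  · intro σ hσ
    exact mapsTo_part m r hm hr w hw fw hfw_per hfw_val σ hσ.1
  · intro σ hσ τ hτ heq
    exact inj_part m r hm hr w hw fw hfw_per hfw_val σ τ hσ.1 hσ.2 hτ.1 hτ.2 heq
  · intro f hf
    obtain ⟨σ, hσ, hcomp⟩ :=
      surj_part m r hm hr w hw fw hfw_per hfw_val f hf.1 hf.2
    exact ⟨σ, hσ, hcomp⟩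
end

section
/- Let m, n, r be positive integers and let N_0 ⊇ N_1 ⊇ ... ⊇ N_r = N_0 + m be a chain of subsets of Z, each closed under adding m and adding n, with |N_i \ N_{i+1}| = w_i for a composition (w_0,...,w_{r-1}) of m, and with |Z_{≥0} \ N_0| = |N_0 \ Z_{≥0}|. Extend the chain by N_{i+r} = N_i + m. Then the function f : Z → Z defined by f^{-1}(i) = N_i \ N_{i+1} is well-defined and satisfies: (1) f(x+m) = f(x)+r for all x; (2) f^{-1}([0,r-1]) has exactly m elements which are pairwise distinct modulo m; (3) the elements of f^{-1}([0,r-1]) sum to m(m-1)/2; (4) f is n-stable, i.e., f(x) ≤ f(x+n) for all x. -/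
set_option maxHeartbeats 1000000 in
/-- Given a chain `(N i)_{i ∈ ℤ}` of `(m,n)`-invariant, bounded-below subsets
of `ℤ` which is decreasing, satisfies `N (i+r) = N i + m`, has
`|N i \ N (i+1)| = w i` for a composition `w` of `m` with `r` parts on the
window `0 ≤ i ≤ r-1`, and is balanced (`|ℤ≥0 \ N 0| = |N 0 \ ℤ≥0|`, both
finite), the function `f : ℤ → ℤ` defined by `f⁻¹(i) = N i \ N (i+1)` is
well-defined and is an `n`-stable `0`-centric `(m,r)`-affine composition:
(1) `f(x+m) = f(x)+r`; (2) `f⁻¹([0,r-1])` has exactly `m` elements, pairwise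
distinct mod `m`; (3) they sum to `m(m-1)/2`; (4) `f(x) ≤ f(x+n)`. -/
theorem chain_gives_affine_composition (m n r : ℕ)
    (hm : 0 < m) (hn : 0 < n) (hr : 0 < r) (hmn : Nat.Coprime m n)
    (w : Fin r → ℕ) (hw : (∑ i, w i) = m)
    (N : ℤ → Set ℤ)
    (hmono : ∀ i : ℤ, N (i + 1) ⊆ N i)
    (hext : ∀ i x : ℤ, x ∈ N i ↔ x + m ∈ N (i + r))
    (hinvm : ∀ i : ℤ, ∀ x ∈ N i, x + m ∈ N i)
    (hinvn : ∀ i : ℤ, ∀ x ∈ N i, x + n ∈ N i)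
    (hbdd : ∀ i : ℤ, ∃ b : ℤ, ∀ x ∈ N i, b ≤ x)
    (hcard : ∀ j : Fin r, Set.ncard (N (j.val : ℤ) \ N ((j.val : ℤ) + 1)) = w j)
    (hfin1 : ({x : ℤ | 0 ≤ x} \ N 0).Finite)
    (hfin2 : (N 0 \ {x : ℤ | 0 ≤ x}).Finite)
    (hbal : Set.ncard ({x : ℤ | 0 ≤ x} \ N 0) = Set.ncard (N 0 \ {x : ℤ | 0 ≤ x})) :
    ∃ f : ℤ → ℤ,
      (∀ x : ℤ, x ∈ N (f x) ∧ x ∉ N (f x + 1)) ∧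
      (∀ x i : ℤ, x ∈ N i → x ∉ N (i + 1) → i = f x) ∧
      (∀ x : ℤ, f (x + m) = f x + r) ∧
      (∃ s : Finset ℤ,
        (∀ x : ℤ, x ∈ s ↔ 0 ≤ f x ∧ f x ≤ (r : ℤ) - 1) ∧
        s.card = m ∧
        (∀ x ∈ s, ∀ y ∈ s, x % m = y % m → x = y) ∧
        2 * (∑ x ∈ s, x) = m * (m - 1)) ∧
      (∀ x : ℤ, f x ≤ f (x + n)) := by
  classical
  have hm1 : (1 : ℤ) ≤ (m : ℤ) := by exact_mod_cast hm
  have hr1 : (1 : ℤ) ≤ (r : ℤ) := by exact_mod_cast hr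
  have hmz : (m : ℤ) ≠ 0 := by omega
  have Ncongr : ∀ {i j x y : ℤ}, i = j → x = y → (x ∈ N i ↔ y ∈ N j) := by
    rintro i j x y rfl rfl; rfl
  -- antitone
  have anti : ∀ i j : ℤ, i ≤ j → N j ⊆ N i := by
    intro i j hij
    obtain ⟨k, hk⟩ := Int.le.dest hij
    subst hk
    clear hij
    induction k with
    | zero => simp
    | succ k ih =>
      intro x hx
      exact ih (hmono (i + k) ((Ncongr (by push_cast; ring) rfl).mpr hx))
  -- iterated shift
  have shk : ∀ (k : ℕ) (i x : ℤ), x ∈ N i ↔ x + k * m ∈ N (i + k * r) := by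
    intro k
    induction k with
    | zero => intro i x; simp
    | succ k ih =>
      intro i x
      rw [ih i x, hext (i + k * r) (x + k * m)]
      exact Ncongr (by push_cast; ring) (by push_cast; ring)
  -- iterated +m invariance
  have invmk : ∀ (i x : ℤ), x ∈ N i → ∀ k : ℕ, x + k * m ∈ N i := by
    intro i x hx k
    induction k with
    | zero => simpa
    | succ k ih =>
      exact (Ncongr rfl (by push_cast; ring)).mp (hinvm i _ ih)
  -- cofinite above at 0
  obtain ⟨B0, hB0⟩ : ∃ B : ℤ, ∀ x, B ≤ x → x ∈ N 0 := by
    obtain ⟨B, hB⟩ := hfin1.bddAbove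
    refine ⟨max (B + 1) 0, fun x hx => ?_⟩
    by_contra hxN
    have h1 : x ∈ ({x : ℤ | 0 ≤ x} \ N 0) := ⟨le_trans (le_max_right _ _) hx, hxN⟩
    have h2 := hB h1
    have h3 := le_trans (le_max_left (B+1) 0) hx
    omega
  -- cofinite above everywhere
  have cof : ∀ i : ℤ, ∃ B : ℤ, ∀ x, B ≤ x → x ∈ N i := by
    intro i
    set k : ℕ := i.toNat with hk
    refine ⟨B0 + k * m, fun x hx => ?_⟩
    have h1 : x - k * m ∈ N 0 := hB0 _ (by omega)
    have h2 : x ∈ N ((k : ℤ) * r) := (Ncongr (by ring) (by ring)).mp ((shk k 0 (x - k * m)).mp h1)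
    refine anti i ((k:ℤ)*r) ?_ h2
    have h3 : (i : ℤ) ≤ (k : ℤ) := Int.self_le_toNat i
    nlinarith
  -- finiteness of differences
  have fin_diff : ∀ i j : ℤ, (N i \ N j).Finite := by
    intro i j
    obtain ⟨b, hb⟩ := hbdd i
    obtain ⟨B, hB⟩ := cof j
    apply Set.Finite.subset (Set.finite_Icc b (B - 1))
    rintro x ⟨hx1, hx2⟩
    refine Set.mem_Icc.mpr ⟨hb x hx1, ?_⟩
    by_contra h
    exact hx2 (hB x (by omega))
  -- existence of f-value
  have exU : ∀ x : ℤ, ∃ i : ℤ, x ∈ N i ∧ x ∉ N (i + 1) := by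
    intro x
    have hne : ∃ i : ℤ, x ∈ N i := by
      set k : ℕ := (B0 - x).toNat with hk
      have h0 : (B0 - x : ℤ) ≤ k := Int.self_le_toNat _
      have h1 : x + (k:ℤ) * m ∈ N 0 := hB0 _ (by nlinarith)
      exact ⟨-((k:ℤ) * r), (shk k (-((k:ℤ)*r)) x).mpr ((Ncongr (by ring) rfl).mp h1)⟩
    have hbd : ∃ b : ℤ, ∀ i : ℤ, x ∈ N i → i ≤ b := by
      obtain ⟨b, hb⟩ := hbdd 0
      set k : ℕ := (x - b + 1).toNat with hk
      have h0 : (x - b + 1 : ℤ) ≤ k := Int.self_le_toNat _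
      refine ⟨(k:ℤ) * r, fun i hi => ?_⟩
      by_contra hcon
      push_neg at hcon
      have h1 : x ∈ N ((k:ℤ) * r) := anti _ i hcon.le hi
      have h2 : x - (k:ℤ)*m ∈ N 0 :=
        (shk k 0 (x - (k:ℤ)*m)).mpr ((Ncongr (by ring) (by ring)).mpr h1)
      have h3 := hb _ h2
      nlinarith
    obtain ⟨i, hi1, hi2⟩ := Int.exists_greatest_of_bdd
      (P := fun i => x ∈ N i) (hbd.imp fun b hb z hz => hb z hz) hne
    exact ⟨i, hi1, fun h => absurd (hi2 _ h) (by omega)⟩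
  choose f hf1 hf2 using exU
  -- key characterization
  have key : ∀ x i : ℤ, x ∈ N i ↔ i ≤ f x := by
    intro x i
    constructor
    · intro h
      by_contra hcon
      push_neg at hcon
      exact hf2 x (anti (f x + 1) i (by omega) h)
    · intro h
      exact anti i (f x) h (hf1 x)
  have uniq : ∀ x i : ℤ, x ∈ N i → x ∉ N (i + 1) → i = f x := by
    intro x i h1 h2
    have h3 := (key x i).mp h1
    have h4 : ¬ (i + 1 ≤ f x) := fun h => h2 ((key x (i+1)).mpr h)
    omega
  refine ⟨f, fun x => ⟨hf1 x, hf2 x⟩, uniq, ?_, ?_, ?_⟩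
  · -- f (x + m) = f x + r
    intro x
    refine (uniq (x + m) (f x + r) ((hext (f x) x).mp (hf1 x)) ?_).symm
    intro h
    apply hf2 x
    rw [hext (f x + 1) x]
    exact (Ncongr (by ring) rfl).mp h
  · -- the finset
    have finS : (N 0 \ N (r:ℤ)).Finite := fin_diff 0 r
    set s : Finset ℤ := finS.toFinset with hs
    have mem_s : ∀ x : ℤ, x ∈ s ↔ x ∈ N 0 ∧ x ∉ N (r:ℤ) := by
      intro x; rw [hs, Set.Finite.mem_toFinset]; rfl
    have mem_s' : ∀ x : ℤ, x ∈ s ↔ 0 ≤ f x ∧ f x ≤ (r:ℤ) - 1 := by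
      intro x
      rw [mem_s, key x 0, key x (r:ℤ)]
      omega
    -- cardinality
    set w' : ℕ → ℕ := fun j => if h : j < r then w ⟨j, h⟩ else 0 with hw'
    have card_k : ∀ k : ℕ, k ≤ r → (N 0 \ N (k:ℤ)).ncard = ∑ j ∈ Finset.range k, w' j := by
      intro k
      induction k with
      | zero => intro _; simp
      | succ k ih =>
        intro hkr
        have hk' : k < r := hkr
        have hsplit : N 0 \ N ((k:ℤ)+1) = (N 0 \ N (k:ℤ)) ∪ (N (k:ℤ) \ N ((k:ℤ)+1)) := by
          ext x
          constructor
          · rintro ⟨h1, h2⟩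
            by_cases h3 : x ∈ N (k:ℤ)
            · exact Or.inr ⟨h3, h2⟩
            · exact Or.inl ⟨h1, h3⟩
          · rintro (⟨h1, h2⟩ | ⟨h1, h2⟩)
            · exact ⟨h1, fun h => h2 (anti _ _ (by omega) h)⟩
            · exact ⟨anti 0 (k:ℤ) (by positivity) h1, h2⟩
        have hdisj : Disjoint (N 0 \ N (k:ℤ)) (N (k:ℤ) \ N ((k:ℤ)+1)) := by
          rw [Set.disjoint_left]; rintro x ⟨_, h2⟩ ⟨h3, _⟩; exact h2 h3
        have heq : (N 0 \ N ((k+1:ℕ):ℤ)) = (N 0 \ N (k:ℤ)) ∪ (N (k:ℤ) \ N ((k:ℤ)+1)) := by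
          rw [show ((k+1:ℕ):ℤ) = (k:ℤ)+1 by push_cast; ring]; exact hsplit
        rw [heq, Set.ncard_union_eq hdisj (fin_diff _ _) (fin_diff _ _), ih (le_of_lt hk'),
          Finset.sum_range_succ]
        congr 1
        have h5 := hcard ⟨k, hk'⟩
        simpa [hw', dif_pos hk'] using h5
    have hscard : s.card = m := by
      have h1 : (N 0 \ N (r:ℤ)).ncard = s.card := Set.ncard_eq_toFinset_card _ finS
      have h2 := card_k r le_rfl
      have h3 : ∑ j ∈ Finset.range r, w' j = m := by
        rw [← hw, ← Fin.sum_univ_eq_sum_range (fun j => w' j) r]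
        exact Finset.sum_congr rfl (fun i _ => by simp [hw', i.isLt])
      omega
    -- distinct residues
    have hnotm : ∀ a ∈ s, a - (m:ℤ) ∉ N 0 := by
      intro a ha h
      exact ((mem_s a).mp ha).2 ((Ncongr (by ring) (by ring)).mp ((hext 0 (a - m)).mp h))
    have hdist : ∀ x ∈ s, ∀ y ∈ s, x % (m:ℤ) = y % (m:ℤ) → x = y := by
      have main : ∀ x ∈ s, ∀ y ∈ s, x % (m:ℤ) = y % (m:ℤ) → x ≤ y → x = y := by
        intro x hx y hy hmod hle
        by_contra hne
        have hdvd : (m:ℤ) ∣ y - x := by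
          rw [Int.dvd_iff_emod_eq_zero, Int.sub_emod, hmod, sub_self, Int.zero_emod]
        obtain ⟨t, ht⟩ := hdvd
        have hlt : x < y := lt_of_le_of_ne hle hne
        have ht1 : 1 ≤ t := by
          rcases le_or_gt 1 t with h | h
          · exact h
          · exfalso
            have h2 : (m:ℤ) * t ≤ 0 := mul_nonpos_of_nonneg_of_nonpos (by omega) (by omega)
            linarith
        have h5 : x + ((t-1).toNat : ℤ) * m ∈ N 0 := invmk 0 x ((mem_s x).mp hx).1 _
        have h6 : y - m ∈ N 0 := by
          refine (Ncongr rfl ?_).mp h5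
          rw [Int.toNat_of_nonneg (by omega)]
          linear_combination -ht
        exact hnotm y hy h6
      intro x hx y hy hmod
      rcases le_total x y with h | h
      · exact main x hx y hy hmod h
      · exact (main y hy x hx hmod.symm h).symm
    -- min and up properties
    have hup : ∀ a, a ∈ N 0 → ∀ y, a ≤ y → y % (m:ℤ) = a % (m:ℤ) → y ∈ N 0 := by
      intro a ha y hay hmod
      have hdvd : (m:ℤ) ∣ y - a := by
        rw [Int.dvd_iff_emod_eq_zero, Int.sub_emod, hmod, sub_self, Int.zero_emod]
      obtain ⟨t, ht⟩ := hdvd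
      have ht0 : 0 ≤ t := by
        rcases le_or_gt 0 t with h | h
        · exact h
        · exfalso
          have h2 : (m:ℤ) * t < 0 := mul_neg_of_pos_of_neg (by omega) h
          linarith
      have h5 : a + (t.toNat : ℤ) * m ∈ N 0 := invmk 0 a ha _
      refine (Ncongr rfl ?_).mp h5
      rw [Int.toNat_of_nonneg ht0]
      linear_combination -ht
    have hmin : ∀ a, a ∈ s → ∀ y, y ∈ N 0 → y % (m:ℤ) = a % (m:ℤ) → a ≤ y := by
      intro a ha y hy hmod
      by_contra hlt
      push_neg at hlt
      have hdvd : (m:ℤ) ∣ a - y := by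
        rw [Int.dvd_iff_emod_eq_zero, Int.sub_emod, hmod, sub_self, Int.zero_emod]
      obtain ⟨t, ht⟩ := hdvd
      have ht1 : 1 ≤ t := by
        rcases le_or_gt 1 t with h | h
        · exact h
        · exfalso
          have h2 : (m:ℤ) * t ≤ 0 := mul_nonpos_of_nonneg_of_nonpos (by omega) (by omega)
          linarith
      have h5 : y + ((t-1).toNat : ℤ) * m ∈ N 0 := invmk 0 y hy _
      have h6 : a - m ∈ N 0 := by
        refine (Ncongr rfl ?_).mp h5
        rw [Int.toNat_of_nonneg (by omega)]
        linear_combination -ht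
      exact hnotm a ha h6
    -- residues of s
    have himg : s.image (· % (m:ℤ)) = Finset.Ico (0:ℤ) (m:ℤ) := by
      apply Finset.eq_of_subset_of_card_le
      · intro j hj
        obtain ⟨a, _, rfl⟩ := Finset.mem_image.mp hj
        exact Finset.mem_Ico.mpr ⟨Int.emod_nonneg a hmz, Int.emod_lt_of_pos a (by omega)⟩
      · rw [Finset.card_image_of_injOn (fun x hx y hy h => hdist x hx y hy h), hscard,
          Int.card_Ico]
        omega
    -- the A and B finsets
    set Afin : ℤ → Finset ℤ :=
      fun a => (Finset.range (a / m).toNat).image (fun k : ℕ => a % m + m * k) with hAfin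
    set Bfin : ℤ → Finset ℤ :=
      fun a => (Finset.range (-(a / m)).toNat).image (fun k : ℕ => a + m * k) with hBfin
    have memA : ∀ a ∈ s, ∀ y : ℤ, y ∈ Afin a ↔ 0 ≤ y ∧ y ∉ N 0 ∧ y % m = a % m := by
      intro a ha y
      have hq := Int.mul_ediv_add_emod a (m:ℤ)
      have hj0 : 0 ≤ a % m := Int.emod_nonneg a hmz
      have hjm : a % m < m := Int.emod_lt_of_pos a (by omega)
      simp only [hAfin, Finset.mem_image, Finset.mem_range]
      constructor
      · rintro ⟨k, hk, rfl⟩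
        have hk' : (k:ℤ) < a / m := Int.lt_toNat.mp hk
        have hya : a % m + m * k < a := by nlinarith
        refine ⟨by positivity, fun hN => ?_, by rw [Int.add_mul_emod_self_left, Int.emod_emod_of_dvd a dvd_rfl]⟩
        have := hmin a ha _ hN (by rw [Int.add_mul_emod_self_left, Int.emod_emod_of_dvd a dvd_rfl])
        omega
      · rintro ⟨hy0, hyN, hmod⟩
        have hqy := Int.mul_ediv_add_emod y (m:ℤ)
        have ht0 : 0 ≤ y / m := Int.ediv_nonneg hy0 (by omega)
        have hya : y < a := by
          by_contra hcon
          push_neg at hcon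
          exact hyN (hup a ((mem_s a).mp ha).1 y hcon hmod)
        have htq : y / m < a / m := by nlinarith
        refine ⟨(y / m).toNat, by omega, ?_⟩
        rw [Int.toNat_of_nonneg ht0]
        linear_combination hqy - hmod
    have memB : ∀ a ∈ s, ∀ y : ℤ, y ∈ Bfin a ↔ y < 0 ∧ y ∈ N 0 ∧ y % m = a % m := by
      intro a ha y
      have hq := Int.mul_ediv_add_emod a (m:ℤ)
      have hj0 : 0 ≤ a % m := Int.emod_nonneg a hmz
      have hjm : a % m < m := Int.emod_lt_of_pos a (by omega)
      simp only [hBfin, Finset.mem_image, Finset.mem_range]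
      constructor
      · rintro ⟨k, hk, rfl⟩
        have hk' : (k:ℤ) < -(a / m) := Int.lt_toNat.mp hk
        refine ⟨by nlinarith, ?_, by rw [Int.add_mul_emod_self_left]⟩
        exact (Ncongr rfl (by ring)).mp (invmk 0 a ((mem_s a).mp ha).1 k)
      · rintro ⟨hy0, hyN, hmod⟩
        have hqy := Int.mul_ediv_add_emod y (m:ℤ)
        have hay : a ≤ y := hmin a ha y hyN hmod
        have htq : a / m ≤ y / m := by nlinarith
        have hty : y / m < 0 := by nlinarith
        refine ⟨(y / m - a / m).toNat, by omega, ?_⟩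
        rw [Int.toNat_of_nonneg (by omega)]
        linear_combination hqy - hq - hmod
    have cardA : ∀ a : ℤ, (Afin a).card = (a / m).toNat := by
      intro a
      rw [hAfin]
      rw [Finset.card_image_of_injOn, Finset.card_range]
      intro k _ l _ h
      dsimp only at h
      have : (m:ℤ) * k = m * l := by omega
      exact_mod_cast mul_left_cancel₀ hmz this
    have cardB : ∀ a : ℤ, (Bfin a).card = (-(a / m)).toNat := by
      intro a
      rw [hBfin]
      rw [Finset.card_image_of_injOn, Finset.card_range]
      intro k _ l _ h
      dsimp only at h
      have : (m:ℤ) * k = m * l := by omega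
      exact_mod_cast mul_left_cancel₀ hmz this
    -- decompositions
    have hres : ∀ y : ℤ, ∃ a ∈ s, a % m = y % m := by
      intro y
      have hy : y % m ∈ Finset.Ico (0:ℤ) (m:ℤ) :=
        Finset.mem_Ico.mpr ⟨Int.emod_nonneg y hmz, Int.emod_lt_of_pos y (by omega)⟩
      rw [← himg] at hy
      obtain ⟨a, ha, hamod⟩ := Finset.mem_image.mp hy
      exact ⟨a, ha, hamod⟩
    have hF1 : hfin1.toFinset = s.biUnion Afin := by
      ext y
      rw [Finset.mem_biUnion, Set.Finite.mem_toFinset]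
      constructor
      · rintro ⟨hy0, hyN⟩
        obtain ⟨a, ha, hamod⟩ := hres y
        exact ⟨a, ha, (memA a ha y).mpr ⟨hy0, hyN, hamod.symm⟩⟩
      · rintro ⟨a, ha, hya⟩
        obtain ⟨h1, h2, _⟩ := (memA a ha y).mp hya
        exact ⟨h1, h2⟩
    have hF2 : hfin2.toFinset = s.biUnion Bfin := by
      ext y
      rw [Finset.mem_biUnion, Set.Finite.mem_toFinset]
      constructor
      · rintro ⟨hyN, hy0⟩
        obtain ⟨a, ha, hamod⟩ := hres y
        refine ⟨a, ha, (memB a ha y).mpr ⟨?_, hyN, hamod.symm⟩⟩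
        simpa using hy0
      · rintro ⟨a, ha, hya⟩
        obtain ⟨h1, h2, _⟩ := (memB a ha y).mp hya
        exact ⟨h2, by simpa using h1⟩
    have hdisjA : ∀ x ∈ s, ∀ y ∈ s, x ≠ y → Disjoint (Afin x) (Afin y) := by
      intro x hx y hy hne
      rw [Finset.disjoint_left]
      intro z hzx hzy
      exact hne (hdist x hx y hy (((memA x hx z).mp hzx).2.2.symm.trans ((memA y hy z).mp hzy).2.2))
    have hdisjB : ∀ x ∈ s, ∀ y ∈ s, x ≠ y → Disjoint (Bfin x) (Bfin y) := by
      intro x hx y hy hne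
      rw [Finset.disjoint_left]
      intro z hzx hzy
      exact hne (hdist x hx y hy (((memB x hx z).mp hzx).2.2.symm.trans ((memB y hy z).mp hzy).2.2))
    have cardF1 : hfin1.toFinset.card = ∑ a ∈ s, (a / m).toNat := by
      rw [hF1, Finset.card_biUnion hdisjA]
      exact Finset.sum_congr rfl (fun a _ => cardA a)
    have cardF2 : hfin2.toFinset.card = ∑ a ∈ s, (-(a / m)).toNat := by
      rw [hF2, Finset.card_biUnion hdisjB]
      exact Finset.sum_congr rfl (fun a _ => cardB a)
    -- balance gives sum of quotients zero
    have hbal' : ∑ a ∈ s, (a / m : ℤ) = 0 := by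
      have h1 : ({x : ℤ | 0 ≤ x} \ N 0).ncard = hfin1.toFinset.card :=
        Set.ncard_eq_toFinset_card _ hfin1
      have h2 : (N 0 \ {x : ℤ | 0 ≤ x}).ncard = hfin2.toFinset.card :=
        Set.ncard_eq_toFinset_card _ hfin2
      have h3 : (∑ a ∈ s, (a / m).toNat) = ∑ a ∈ s, (-(a / m)).toNat := by
        omega
      have h4 : (∑ a ∈ s, ((a / m).toNat : ℤ)) = ∑ a ∈ s, ((-(a / m)).toNat : ℤ) := by
        exact_mod_cast congrArg (Nat.cast : ℕ → ℤ) h3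
      have h5 : ∑ a ∈ s, (a / m : ℤ) =
          ∑ a ∈ s, (((a / m).toNat : ℤ) - ((-(a / m)).toNat : ℤ)) :=
        Finset.sum_congr rfl (fun a _ => by omega)
      rw [h5, Finset.sum_sub_distrib, h4, sub_self]
    -- Gauss sum
    have gauss : ∀ M : ℕ, 2 * (∑ j ∈ Finset.Ico (0:ℤ) (M:ℤ), j) = (M:ℤ) * ((M:ℤ) - 1) := by
      intro M
      induction M with
      | zero => simp
      | succ M ih =>
        have hins : Finset.Ico (0:ℤ) ((M+1:ℕ):ℤ) = insert (M:ℤ) (Finset.Ico (0:ℤ) (M:ℤ)) := by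
          ext z
          simp only [Finset.mem_Ico, Finset.mem_insert]
          omega
        rw [hins, Finset.sum_insert (by simp), mul_add, ih]
        push_cast
        ring
    refine ⟨s, mem_s', hscard, hdist, ?_⟩
    have h1 : ∑ x ∈ s, x = ∑ x ∈ s, ((m:ℤ) * (x / m) + x % m) :=
      Finset.sum_congr rfl (fun x _ => (Int.mul_ediv_add_emod x (m:ℤ)).symm)
    have h2 : ∑ x ∈ s, (x % (m:ℤ)) = ∑ j ∈ Finset.Ico (0:ℤ) (m:ℤ), j := by
      rw [← himg, Finset.sum_image (fun x hx y hy h => hdist x hx y hy h)]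
    rw [h1, Finset.sum_add_distrib, ← Finset.mul_sum, hbal', mul_zero, zero_add, h2]
    exact gauss m
  · -- stability
    intro x
    exact (key (x + n) (f x)).mp (hinvn (f x) x (hf1 x))
end

section
/- Let m, n be coprime positive integers and let a ∈ Z^{n×r}_{≥0}(m) with row sums a_k = Σ_j a_{kj}. Define t_k(a) = mk/n - (a_1 + ... + a_k) for k = 1,...,n, and say k is a maximum of a if t_k(a) ≥ t_p(a) for all p. If k ≠ 1 is a maximum of a, then k-1 is a maximum of ρ·a; and if k = 1 is a maximum of a, then n is a maximum of ρ·a. Here ρ cyclically shifts the first index: (ρ·a)_{i,j} = a_{i+1,j} with indices mod n. -/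
/-- `tstat m n r a k = m*(k+1)/n - (a_1 + ⋯ + a_{k+1})` where row `k : Fin n`
(0-indexed) corresponds to the 1-indexed row `k+1` and `a_i` is the `i`-th row
sum of the array `a`. -/
noncomputable def tstat (m n r : ℕ) (a : Fin n → Fin r → ℕ) (k : Fin n) : ℚ :=
  (m * (k.val + 1) : ℚ) / n -
    ∑ i ∈ Finset.univ.filter (fun i : Fin n => i.val ≤ k.val), ∑ j, (a i j : ℚ)

/-- `k` is a maximum of `a` if it maximizes `tstat`. -/
def IsMaxRow (m n r : ℕ) (a : Fin n → Fin r → ℕ) (k : Fin n) : Prop :=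
  ∀ p : Fin n, tstat m n r a p ≤ tstat m n r a k

namespace MaximaShiftAux

noncomputable def G (n r : ℕ) (a : Fin n → Fin r → ℕ) (t : ℕ) : ℚ :=
  if h : t < n then ∑ j, (a ⟨t, h⟩ j : ℚ) else 0

lemma tstat_eq (m n r : ℕ) (a : Fin n → Fin r → ℕ) (k : Fin n) :
    tstat m n r a k = (m * (k.val + 1) : ℚ) / n -
      ∑ t ∈ Finset.range (k.val + 1), G n r a t := by
  unfold tstat
  congr 1
  refine Finset.sum_bij' (fun (i : Fin n) (_ : i ∈ _) => i.val)
    (fun t ht => (⟨t, by have h1 := Finset.mem_range.mp ht; have h2 := k.isLt; omega⟩ : Fin n))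
    ?_ ?_ ?_ ?_ ?_
  · intro i hi
    simp only [Finset.mem_filter, Finset.mem_univ, true_and] at hi
    simpa using Nat.lt_succ_of_le hi
  · intro t ht
    simp only [Finset.mem_filter, Finset.mem_univ, true_and]
    have := Finset.mem_range.mp ht; omega
  · intro i hi; simp
  · intro t ht; simp
  · intro i hi
    simp [G, i.isLt]

lemma total_eq (m n r : ℕ) (hn : 0 < n) (a : Fin n → Fin r → ℕ)
    (ha : (∑ i, ∑ j, a i j) = m) :
    ∑ t ∈ Finset.range n, G n r a t = m := by
  have h1 : ∑ t ∈ Finset.range n, G n r a t = ∑ i : Fin n, ∑ j, (a i j : ℚ) := by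
    rw [← Fin.sum_univ_eq_sum_range (fun t => G n r a t) n]
    exact Finset.sum_congr rfl (fun i _ => by simp [G, i.isLt])
  rw [h1]
  have := congrArg (Nat.cast : ℕ → ℚ) ha
  push_cast at this
  exact this

lemma G_shift (n r : ℕ) (hn2 : 2 ≤ n) (a : Fin n → Fin r → ℕ) (t : ℕ) (ht : t + 1 < n) :
    G n r (fun i j => a (i + Fin.mk (1 % n) (Nat.mod_lt 1 (by omega))) j) t = G n r a (t + 1) := by
  have h1 : (1 : ℕ) % n = 1 := Nat.mod_eq_of_lt (by omega)
  have ht' : t < n := by omega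
  simp only [G, dif_pos ht, dif_pos ht']
  congr 1
  ext
  simp [Fin.add_def, h1, Nat.mod_eq_of_lt ht]

lemma G_shift_last (n r : ℕ) (hn2 : 2 ≤ n) (a : Fin n → Fin r → ℕ) :
    G n r (fun i j => a (i + Fin.mk (1 % n) (Nat.mod_lt 1 (by omega))) j) (n - 1) = G n r a 0 := by
  have h1 : (1 : ℕ) % n = 1 := Nat.mod_eq_of_lt (by omega)
  have ht' : n - 1 < n := by omega
  simp only [G, dif_pos ht', dif_pos (show 0 < n by omega)]
  congr 1
  ext
  simp [Fin.add_def, h1, Nat.sub_add_cancel (by omega : 1 ≤ n)]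

lemma shift_sum (n r : ℕ) (hn2 : 2 ≤ n) (a : Fin n → Fin r → ℕ) (c : ℕ) (hc : c ≤ n - 1) :
    ∑ t ∈ Finset.range c, G n r (fun i j => a (i + Fin.mk (1 % n) (Nat.mod_lt 1 (by omega))) j) t
      = ∑ t ∈ Finset.range (c + 1), G n r a t - G n r a 0 := by
  rw [Finset.sum_range_succ']
  have : ∀ t ∈ Finset.range c,
      G n r (fun i j => a (i + Fin.mk (1 % n) (Nat.mod_lt 1 (by omega))) j) t = G n r a (t + 1) := by
    intro t ht
    exact G_shift n r hn2 a t (by have := Finset.mem_range.mp ht; omega)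
  rw [Finset.sum_congr rfl this]
  ring

lemma shift_total (n r : ℕ) (hn2 : 2 ≤ n) (a : Fin n → Fin r → ℕ) :
    ∑ t ∈ Finset.range n, G n r (fun i j => a (i + Fin.mk (1 % n) (Nat.mod_lt 1 (by omega))) j) t
      = ∑ t ∈ Finset.range n, G n r a t := by
  have hr : Finset.range n = Finset.range ((n - 1) + 1) := by congr 1; omega
  rw [hr, Finset.sum_range_succ, Finset.sum_range_succ,
    shift_sum n r hn2 a (n - 1) le_rfl, G_shift_last n r hn2 a]
  rw [← hr, hr, Finset.sum_range_succ]
  ring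

lemma tstat_shift (m n r : ℕ) (hn2 : 2 ≤ n) (a : Fin n → Fin r → ℕ) (p : Fin n)
    (hp : p.val + 1 < n) :
    tstat m n r (fun i j => a (i + Fin.mk (1 % n) (Nat.mod_lt 1 (by omega))) j) p
      = tstat m n r a ⟨p.val + 1, hp⟩ - tstat m n r a ⟨0, by omega⟩ := by
  have hn0 : (n : ℚ) ≠ 0 := by positivity
  rw [tstat_eq, tstat_eq, tstat_eq,
    shift_sum n r hn2 a (p.val + 1) (by omega)]
  simp only [Finset.sum_range_one]
  push_cast
  field_simp
  rw [Finset.sum_range_one]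
  ring

lemma tstat_shift_last (m n r : ℕ) (hn2 : 2 ≤ n) (a : Fin n → Fin r → ℕ) :
    tstat m n r (fun i j => a (i + Fin.mk (1 % n) (Nat.mod_lt 1 (by omega))) j)
        ⟨n - 1, by omega⟩
      = tstat m n r a ⟨n - 1, by omega⟩ := by
  rw [tstat_eq, tstat_eq]
  have h1 : n - 1 + 1 = n := by omega
  simp only [h1]
  rw [shift_total n r hn2 a]

lemma tstat_last (m n r : ℕ) (hn : 0 < n) (a : Fin n → Fin r → ℕ)
    (ha : (∑ i, ∑ j, a i j) = m) :
    tstat m n r a ⟨n - 1, by omega⟩ = 0 := by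
  have hn0 : (n : ℚ) ≠ 0 := by positivity
  rw [tstat_eq]
  have h1 : n - 1 + 1 = n := by omega
  simp only [h1]
  rw [total_eq m n r hn a ha]
  push_cast [h1]
  field_simp
  push_cast [Nat.cast_sub (show 1 ≤ n by omega)]
  ring

end MaximaShiftAux

open MaximaShiftAux in
/-- If `k` (1-indexed; here the 0-indexed `k : Fin n`) is a maximum of the
array `a`, then: if `k ≠ 1` then `k - 1` is a maximum of the cyclic shift
`ρ·a` (given by `(ρ·a) i j = a (i+1) j` with the row index mod `n`), and if
`k = 1` then `n` is a maximum of `ρ·a`. -/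
theorem maxima_shift (m n r : ℕ) (hm : 0 < m) (hn : 0 < n) (hr : 0 < r)
    (hmn : Nat.Coprime m n)
    (a : Fin n → Fin r → ℕ) (ha : (∑ i, ∑ j, a i j) = m)
    (k : Fin n) (hk : IsMaxRow m n r a k) :
    (k.val ≠ 0 → IsMaxRow m n r (fun i j => a (i + Fin.mk (1 % n) (Nat.mod_lt 1 hn)) j)
        (Fin.mk (k.val - 1) (Nat.lt_of_le_of_lt (Nat.sub_le _ _) k.isLt))) ∧
    (k.val = 0 → IsMaxRow m n r (fun i j => a (i + Fin.mk (1 % n) (Nat.mod_lt 1 hn)) j)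
        (Fin.mk (n - 1) (Nat.sub_lt hn Nat.one_pos))) := by
  rcases eq_or_lt_of_le (show 1 ≤ n from hn) with h1 | hn2
  · -- n = 1
    have hn1 : n = 1 := h1.symm
    subst hn1
    constructor
    · intro hk0
      exact absurd (by omega : k.val = 0) hk0
    · intro _ p
      have : p = ⟨1 - 1, Nat.sub_lt hn Nat.one_pos⟩ := by
        apply Fin.ext; have := p.isLt; omega
      rw [this]
  · -- n ≥ 2
    have hn2' : 2 ≤ n := hn2
    have hlast : tstat m n r a ⟨n - 1, by omega⟩ = 0 := tstat_last m n r hn a ha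
    constructor
    · intro hk0
      intro p
      have hkk : k.val - 1 + 1 < n := by have := k.isLt; omega
      have htgt : tstat m n r (fun i j => a (i + Fin.mk (1 % n) (Nat.mod_lt 1 hn)) j)
          (Fin.mk (k.val - 1) (Nat.lt_of_le_of_lt (Nat.sub_le _ _) k.isLt))
          = tstat m n r a k - tstat m n r a ⟨0, hn⟩ := by
        rw [tstat_shift m n r hn2' a _ hkk]
        congr 2
        apply Fin.ext
        show k.val - 1 + 1 = k.val
        omega
      rw [htgt]
      by_cases hp : p.val + 1 < n
      · rw [tstat_shift m n r hn2' a p hp]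
        have := hk ⟨p.val + 1, hp⟩
        linarith
      · have hpv : p = ⟨n - 1, by omega⟩ := by apply Fin.ext; have := p.isLt; simp; omega
        rw [hpv, tstat_shift_last m n r hn2' a, hlast]
        have h0 := hk ⟨0, hn⟩
        linarith
    · intro hk0
      intro p
      have htgt : tstat m n r (fun i j => a (i + Fin.mk (1 % n) (Nat.mod_lt 1 hn)) j)
          (Fin.mk (n - 1) (Nat.sub_lt hn Nat.one_pos)) = 0 := by
        rw [tstat_shift_last m n r hn2' a, hlast]
      rw [htgt]
      by_cases hp : p.val + 1 < n
      · rw [tstat_shift m n r hn2' a p hp]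
        have hke : k = ⟨0, hn⟩ := Fin.ext hk0
        have := hk ⟨p.val + 1, hp⟩
        rw [hke] at this
        linarith
      · have hpv : p = ⟨n - 1, by omega⟩ := by apply Fin.ext; have := p.isLt; simp; omega
        rw [hpv, tstat_shift_last m n r hn2' a, hlast]
end

section
/- With the same setup, the number of indices k ∈ {1,...,n} that are maxima of a equals the number of indices that are maxima of ρ·a; i.e., the cyclic shift action of Z/nZ on Z^{n×r}_{≥0}(m) preserves the number of maxima. -/
lemma filter_le_sum {n : ℕ} (hn : 0 < n) (f : Fin n → ℚ) (k : Fin n) :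
    ∑ i ∈ Finset.univ.filter (fun i : Fin n => i.val ≤ k.val), f i
      = ∑ i ∈ Finset.range (k.val + 1), f ⟨i % n, Nat.mod_lt i hn⟩ := by
  refine Finset.sum_nbij' (fun i : Fin n => i.val)
    (fun i : ℕ => (⟨i % n, Nat.mod_lt i hn⟩ : Fin n)) ?_ ?_ ?_ ?_ ?_
  · intro i hi
    simp only [Finset.mem_filter] at hi
    simp [Nat.lt_succ_iff, hi.2]
  · intro i hi
    simp only [Finset.mem_range, Nat.lt_succ_iff] at hi
    simp only [Finset.mem_filter, Finset.mem_univ, true_and]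
    calc i % n ≤ i := Nat.mod_le i n
      _ ≤ k.val := hi
  · intro i hi; ext; simp [Nat.mod_eq_of_lt i.isLt]
  · intro i hi
    simp only [Finset.mem_range, Nat.lt_succ_iff] at hi
    exact Nat.mod_eq_of_lt (lt_of_le_of_lt hi k.isLt)
  · intro i hi
    congr 1
    ext
    simp [Nat.mod_eq_of_lt i.isLt]

lemma tstat_shift (m n r : ℕ) (hn : 0 < n)
    (a : Fin n → Fin r → ℕ) (ha : (∑ i, ∑ j, a i j) = m) (k : Fin n) :
    tstat m n r (fun i j => a (i + Fin.mk (1 % n) (Nat.mod_lt 1 hn)) j) k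
      = tstat m n r a (k + Fin.mk (1 % n) (Nat.mod_lt 1 hn))
        + (∑ j, (a ⟨0, hn⟩ j : ℚ)) - m / n := by
  set c : Fin n := ⟨1 % n, Nat.mod_lt 1 hn⟩ with hc
  set A : ℕ → ℚ := fun i => ∑ j, (a ⟨i % n, Nat.mod_lt i hn⟩ j : ℚ) with hA
  have hn' : (n : ℚ) ≠ 0 := Nat.cast_ne_zero.mpr hn.ne'
  have hA0 : (∑ j, (a ⟨0, hn⟩ j : ℚ)) = A 0 := by
    simp only [hA]
    congr 1
  have hshift : ∀ i : ℕ, ((⟨i % n, Nat.mod_lt i hn⟩ : Fin n) + c) =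
      (⟨(i + 1) % n, Nat.mod_lt _ hn⟩ : Fin n) := by
    intro i
    ext
    simp only [Fin.add_def, hc]
    conv_rhs => rw [Nat.add_mod]
  have hkc : (k + c).val = (k.val + 1) % n := by
    simp only [Fin.add_def, hc]
    conv_rhs => rw [Nat.add_mod]
    rw [Nat.mod_eq_of_lt k.isLt]
  have hT : ∑ i ∈ Finset.range n, A i = m := by
    have h1 : ∀ i : Fin n, A i.val = ∑ j, (a i j : ℚ) := by
      intro i
      simp only [hA]
      have hmod : i.val % n = i.val := Nat.mod_eq_of_lt i.isLt
      simp [hmod]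
    calc ∑ i ∈ Finset.range n, A i = ∑ i : Fin n, A i.val :=
          (Fin.sum_univ_eq_sum_range A n).symm
      _ = ∑ i : Fin n, ∑ j, (a i j : ℚ) := by simp [h1]
      _ = m := by push_cast [← ha]; norm_num
  unfold tstat
  rw [filter_le_sum hn, filter_le_sum hn]
  have hLsum : (∑ i ∈ Finset.range (k.val + 1),
      ∑ j, ((a ((⟨i % n, Nat.mod_lt i hn⟩ : Fin n) + c) j : ℚ)))
      = ∑ i ∈ Finset.range (k.val + 2), A i - A 0 := by
    have := Finset.sum_range_succ' A (k.val + 1)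
    rw [this]
    simp only [add_sub_cancel_right]
    apply Finset.sum_congr rfl
    intro i _
    rw [hshift i]
  rw [hLsum]
  rcases lt_or_eq_of_le (Nat.succ_le_of_lt k.isLt) with h | h
  · -- k.val + 1 < n
    have h1 : (k + c).val = k.val + 1 := by rw [hkc, Nat.mod_eq_of_lt h]
    rw [h1]
    have h2 : (∑ i ∈ Finset.range (k.val + 1 + 1),
        ∑ j, ((a (⟨i % n, Nat.mod_lt i hn⟩ : Fin n) j : ℚ)))
        = ∑ i ∈ Finset.range (k.val + 2), A i := rfl
    rw [h2, hA0]
    push_cast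
    ring
  · -- k.val + 1 = n
    have hkn : k.val + 1 = n := h
    have h1 : (k + c).val = 0 := by rw [hkc, hkn, Nat.mod_self]
    rw [h1]
    have h2 : (∑ i ∈ Finset.range (0 + 1),
        ∑ j, ((a (⟨i % n, Nat.mod_lt i hn⟩ : Fin n) j : ℚ))) = A 0 := by
      simp [hA]
    rw [h2]
    have h3 : ∑ i ∈ Finset.range (k.val + 2), A i = m + A 0 := by
      have : k.val + 2 = n + 1 := by omega
      rw [this, Finset.sum_range_succ, hT]
      have hmod : n % n = 0 := Nat.mod_self n
      simp [hA, hmod]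
    rw [h3, hA0]
    have h4 : (m : ℚ) * (k.val + 1) / n = m := by
      rw [show ((k.val : ℚ) + 1) = n by exact_mod_cast congrArg Nat.cast h]
      field_simp
    rw [h4]
    push_cast
    ring

/-- The cyclic shift action on nonnegative `n × r` arrays of total sum `m`
preserves the number of maxima: `a` and `ρ·a` have the same number of maximal
indices. -/
theorem maxima_count_invariant (m n r : ℕ) (hm : 0 < m) (hn : 0 < n)
    (hr : 0 < r) (hmn : Nat.Coprime m n)
    (a : Fin n → Fin r → ℕ) (ha : (∑ i, ∑ j, a i j) = m) :
    Set.ncard {k : Fin n | IsMaxRow m n r a k}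
      = Set.ncard {k : Fin n |
          IsMaxRow m n r (fun i j => a (i + Fin.mk (1 % n) (Nat.mod_lt 1 hn)) j) k} := by

  haveI : NeZero n := ⟨hn.ne'⟩
  have key : ∀ k : Fin n,
      IsMaxRow m n r (fun i j => a (i + Fin.mk (1 % n) (Nat.mod_lt 1 hn)) j) k
        ↔ IsMaxRow m n r a (k + Fin.mk (1 % n) (Nat.mod_lt 1 hn)) := by
    intro k
    simp only [IsMaxRow]
    constructor
    · intro h p
      have h2 := h (p - Fin.mk (1 % n) (Nat.mod_lt 1 hn))
      rw [tstat_shift m n r hn a ha, tstat_shift m n r hn a ha, sub_add_cancel] at h2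
      linarith
    · intro h p
      rw [tstat_shift m n r hn a ha, tstat_shift m n r hn a ha]
      have := h (p + Fin.mk (1 % n) (Nat.mod_lt 1 hn))
      linarith
  have himg : {k : Fin n |
        IsMaxRow m n r (fun i j => a (i + Fin.mk (1 % n) (Nat.mod_lt 1 hn)) j) k}
      = (fun x : Fin n => x - Fin.mk (1 % n) (Nat.mod_lt 1 hn)) ''
          {k : Fin n | IsMaxRow m n r a k} := by
    ext x
    simp only [Set.mem_image, Set.mem_setOf_eq, key]
    constructor
    · intro h
      exact ⟨x + Fin.mk (1 % n) (Nat.mod_lt 1 hn), h, by simp⟩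
    · rintro ⟨y, hy, rfl⟩
      simpa using hy
  rw [himg, Set.ncard_image_of_injective _ sub_left_injective]
end

section
/- For every r ≥ 1 and coprime positive m, n, there is a natural injection from the set of rank r semistandard (m,n)-parking functions into the set of rank r+1 semistandard (m,n)-parking functions; moreover the rank 1 semistandard (m,n)-parking functions are in bijection with (m,n)-Dyck paths, and the rank m semistandard parking functions of weight (1,1,...,1) are exactly the (m,n)-parking functions. -/
/-- Row-sum (Dyck) condition: `m * k ≤ n * (g 0 + ⋯ + g (k-1))` for `k ≤ n`. -/
def RowOK (m n : ℕ) (g : Fin n → ℕ) : Prop :=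
  ∀ k : ℕ, k ≤ n →
    m * k ≤ n * ∑ i ∈ Finset.univ.filter (fun i : Fin n => i.val < k), g i

/-- Rank `r` semistandard `(m,n)`-parking functions, encoded as arrays
`a : Fin n → Fin r → ℕ` (`a i j` = number of south steps in column `i` of the
Dyck path labeled `j+1`; labels in a column are read weakly increasingly going
down, so this encoding is in bijection with semistandard parking functions). -/
def SSPF (m n r : ℕ) : Set (Fin n → Fin r → ℕ) :=
  {a | (∑ i, ∑ j, a i j) = m ∧ RowOK m n (fun i => ∑ j, a i j)}

/-- `(m,n)`-Dyck paths encoded by their columns of south steps. -/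
def DyckSet (m n : ℕ) : Set (Fin n → ℕ) :=
  {g | (∑ i, g i) = m ∧ RowOK m n g}

/-- `(m,n)`-parking functions in the array encoding: each entry is `0` or `1`,
each label `j` is used exactly once, and the row sums satisfy the Dyck
condition.  (The strict increase of labels down a column is automatic in this
encoding.) -/
def ParkSet (m n : ℕ) : Set (Fin n → Fin m → ℕ) :=
  {a | (∀ i j, a i j ≤ 1) ∧ (∀ j : Fin m, (∑ i, a i j) = 1) ∧
    RowOK m n (fun i => ∑ j, a i j)}

private lemma ext_sum (r : ℕ) (f : Fin r → ℕ) :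
    (∑ j : Fin (r + 1), if h : j.val < r then f ⟨j.val, h⟩ else 0) = ∑ j, f j := by
  rw [Fin.sum_univ_castSucc]
  simp [Fin.castSucc, Fin.is_lt]

/-- (i) Extending labelings by an unused extra label gives a natural injection
of rank `r` semistandard `(m,n)`-parking functions into rank `r+1` ones;
(ii) rank `1` semistandard parking functions are in bijection with
`(m,n)`-Dyck paths; (iii) the rank `m` semistandard parking functions of
weight `(1,…,1)` are exactly the `(m,n)`-parking functions. -/
theorem sspf_interpolation (m n r : ℕ) (hm : 0 < m) (hn : 0 < n) (hr : 0 < r)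
    (hmn : Nat.Coprime m n) :
    (Set.MapsTo
        (fun (a : Fin n → Fin r → ℕ) (i : Fin n) (j : Fin (r + 1)) =>
          if h : j.val < r then a i ⟨j.val, h⟩ else 0)
        (SSPF m n r) (SSPF m n (r + 1)) ∧
      Set.InjOn
        (fun (a : Fin n → Fin r → ℕ) (i : Fin n) (j : Fin (r + 1)) =>
          if h : j.val < r then a i ⟨j.val, h⟩ else 0)
        (SSPF m n r)) ∧
    Set.BijOn (fun (a : Fin n → Fin 1 → ℕ) (i : Fin n) => a i 0)
      (SSPF m n 1) (DyckSet m n) ∧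
    (SSPF m n m ∩ {a | ∀ j : Fin m, (∑ i, a i j) = 1}) = ParkSet m n := by
  refine ⟨⟨?_, ?_⟩, ⟨?_, ?_, ?_⟩, ?_⟩
  · intro a ⟨h1, h2⟩
    refine ⟨?_, ?_⟩
    · simpa only [ext_sum] using h1
    · simpa only [ext_sum] using h2
  · intro a _ b _ hab
    funext i j
    have := congrFun (congrFun hab i) j.castSucc
    simpa [Fin.is_lt] using this
  · intro a ⟨h1, h2⟩
    constructor
    · simpa [Fin.sum_univ_one] using h1
    · intro k hk
      have := h2 k hk
      simpa [Fin.sum_univ_one] using this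
  · intro a _ b _ hab
    funext i j
    have := congrFun hab i
    simpa [Subsingleton.elim j 0] using this
  · intro g ⟨h1, h2⟩
    refine ⟨fun i _ => g i, ⟨?_, ?_⟩, rfl⟩
    · simpa [Fin.sum_univ_one] using h1
    · intro k hk
      simpa [Fin.sum_univ_one] using h2 k hk
  · ext a
    constructor
    · rintro ⟨⟨h1, h2⟩, hcol⟩
      refine ⟨?_, hcol, h2⟩
      intro i j
      calc a i j ≤ ∑ i', a i' j :=
            Finset.single_le_sum (f := fun i' => a i' j) (fun _ _ => Nat.zero_le _) (Finset.mem_univ i)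
        _ = 1 := hcol j
    · rintro ⟨hle, hcol, hrow⟩
      refine ⟨⟨?_, hrow⟩, hcol⟩
      rw [Finset.sum_comm]
      simp [hcol]
end

section
/- Fix coprime m, n and a composition w of m with r parts. For each (m,n)-parking function (D, φ), define its w-semistandardization sstd_w(D, φ) = (D, Υ) by Υ(φ^{-1}(i)) = j whenever i ∈ [w_1+...+w_{j-1}+1, w_1+...+w_j]. Then sstd_w is a left inverse to standardization: for every rank r semistandard (m,n)-parking function (D, Υ) of weight w, sstd_w(std(D, Υ)) = (D, Υ), where std(D, Υ) = (D, φ) is the parking function with the same Dyck path determined by: φ(v) < φ(v') whenever Υ(v) < Υ(v'), and φ(v) < φ(v') whenever Υ(v) = Υ(v') and γ(v) < γ(v') (γ(x,y) = mn - mx - ny evaluated at the top endpoint of the vertical step). -/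
/-- The `x`-coordinate of the `(t+1)`-st south step (counted from the top) of
the Dyck path with column data `a`: the number of columns whose cumulative sum
of south steps is at most `t`. -/
def xcoord (n : ℕ) (a : Fin n → ℕ) (t : ℕ) : ℕ :=
  (Finset.univ.filter (fun i : Fin n =>
    (∑ j ∈ Finset.univ.filter (fun j : Fin n => j ≤ i), a j) ≤ t)).card

/-- The Anderson label `γ = m*n - m*x - n*y` of the `(t+1)`-st south step from
the top, whose top endpoint is `(xcoord n a t, m - t)`. -/
def gam (m n : ℕ) (a : Fin n → ℕ) (t : Fin m) : ℤ :=
  (m : ℤ) * n - m * xcoord n a t.val - n * ((m : ℤ) - t.val)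

private theorem sstd_card_phi_lt {m : ℕ} (φ : Fin m → Fin m) (hφ : Function.Bijective φ)
    (t : Fin m) :
    (Finset.univ.filter (fun u => φ u < φ t)).card = (φ t).val := by
  have h1 : (Finset.univ.filter (fun u => φ u < φ t)).card
      = (Finset.univ.filter (fun v : Fin m => v < φ t)).card := by
    apply Finset.card_bij (fun u _ => φ u)
    · intro u hu; simp only [Finset.mem_filter, Finset.mem_univ, true_and] at hu ⊢; exact hu
    · intro u _ v _ h; exact hφ.1 h
    · intro v hv
      obtain ⟨u, rfl⟩ := hφ.2 v
      simp only [Finset.mem_filter, Finset.mem_univ, true_and] at hv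
      exact ⟨u, by simpa using hv, rfl⟩
  have h2 : Finset.univ.filter (fun v : Fin m => v < φ t) = Finset.Iio (φ t) := by
    ext v; simp
  rw [h1, h2, Fin.card_Iio]

private theorem sstd_card_fiber {m r : ℕ} (Υ : Fin m → Fin r) (w : Fin r → ℕ)
    (hwt : ∀ j : Fin r, (Finset.univ.filter (fun t : Fin m => Υ t = j)).card = w j)
    (p : Fin r → Prop) [DecidablePred p] :
    (Finset.univ.filter (fun u : Fin m => p (Υ u))).card
      = ∑ j ∈ Finset.univ.filter p, w j := by
  rw [Finset.card_eq_sum_card_fiberwise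
    (f := Υ) (t := Finset.univ.filter p)
    (fun u hu => by simpa using (Finset.mem_filter.mp hu).2)]
  apply Finset.sum_congr rfl
  intro j hj
  rw [← hwt j]
  congr 1
  ext u
  simp only [Finset.mem_filter, Finset.mem_univ, true_and]
  constructor
  · rintro ⟨_, h⟩; exact h
  · rintro h; exact ⟨h ▸ (Finset.mem_filter.mp hj).2, h⟩

/-- `w`-semistandardization is a left inverse to standardization.  Let
`(D, Υ)` be a rank `r` semistandard `(m,n)`-parking function of weight `w`
(vertical steps indexed top-down by `Fin m`; consecutive steps in a column,
i.e. `t, t+1` with equal `x`-coordinates, have weakly increasing labels), and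
let `φ` be its standardization: the bijection of `Fin m` with
`φ t < φ u ↔ Υ t < Υ u ∨ (Υ t = Υ u ∧ γ t < γ u)`.  Then applying
`w`-semistandardization to `φ` recovers `Υ`: for every vertical step `t`, the
standard label `φ t` lies in the `Υ t`-th window
`(w₁+⋯+w_{Υt-1}, w₁+⋯+w_{Υt}]`. -/
theorem sstd_std_eq_id (m n r : ℕ) (hm : 0 < m) (hn : 0 < n) (hr : 0 < r)
    (hmn : Nat.Coprime m n)
    (w : Fin r → ℕ) (hw : (∑ i, w i) = m)
    (a : Fin n → ℕ) (hsum : (∑ i, a i) = m) (hdyck : RowOK m n a)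
    (Υ : Fin m → Fin r)
    (hss : ∀ t u : Fin m, t.val + 1 = u.val → xcoord n a t.val = xcoord n a u.val →
      Υ t ≤ Υ u)
    (hwt : ∀ j : Fin r, (Finset.univ.filter (fun t : Fin m => Υ t = j)).card = w j)
    (φ : Fin m → Fin m) (hφ : Function.Bijective φ)
    (hstd : ∀ t u : Fin m, φ t < φ u ↔
      (Υ t < Υ u ∨ (Υ t = Υ u ∧ gam m n a t < gam m n a u))) :
    ∀ t : Fin m,
      (∑ j ∈ Finset.univ.filter (fun j : Fin r => j.val < (Υ t).val), w j) < (φ t).val + 1 ∧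
      (φ t).val + 1 ≤ ∑ j ∈ Finset.univ.filter (fun j : Fin r => j.val ≤ (Υ t).val), w j := by
  intro t
  have hlt : (Finset.univ.filter (fun u : Fin m => Υ u < Υ t)).card
      ≤ (Finset.univ.filter (fun u => φ u < φ t)).card := by
    apply Finset.card_le_card
    intro u hu
    simp only [Finset.mem_filter, Finset.mem_univ, true_and] at hu ⊢
    exact (hstd u t).2 (Or.inl hu)
  have hle : (insert t (Finset.univ.filter (fun u => φ u < φ t))).card
      ≤ (Finset.univ.filter (fun u : Fin m => Υ u ≤ Υ t)).card := by
    apply Finset.card_le_card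
    intro u hu
    simp only [Finset.mem_insert, Finset.mem_filter, Finset.mem_univ, true_and] at hu ⊢
    rcases hu with rfl | hu
    · exact le_refl _
    · rcases (hstd u t).1 hu with h | ⟨h, _⟩
      · exact le_of_lt h
      · exact le_of_eq h
  rw [Finset.card_insert_of_notMem (by simp), sstd_card_phi_lt φ hφ t] at hle
  rw [sstd_card_phi_lt φ hφ t] at hlt
  rw [sstd_card_fiber Υ w hwt (fun j => j ≤ Υ t)] at hle
  rw [sstd_card_fiber Υ w hwt (fun j => j < Υ t)] at hlt
  constructor
  · refine lt_of_le_of_lt (le_trans (le_of_eq ?_) hlt) (Nat.lt_succ_self _)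
    apply Finset.sum_congr _ (fun _ _ => rfl)
    ext j
    simp only [Finset.mem_filter, Finset.mem_univ, true_and, Fin.lt_def]
  · refine le_trans hle (le_of_eq ?_)
    apply Finset.sum_congr _ (fun _ _ => rfl)
    ext j
    simp only [Finset.mem_filter, Finset.mem_univ, true_and, Fin.le_def]
end
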